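/- arXiv:2109.02547 — 6 statements merged into one kernel-verified Lean document; each statement's English description precedes it below -/
import Mathlib

section
/- Let m ≥ 2. Define s_m := Γ(m/2)² / (Γ((m-1)/2) · Γ((m+1)/2)). Then s_m ∈ (0,1), and for all θ ∈ [0, π]: p^{(m)}(θ) − p^{(m+1)}(θ) ≥ 0 if sin θ ≤ s_m, and p^{(m)}(θ) − p^{(m+1)}(θ) < 0 if s_m < sin θ ≤ 1, where p^{(m)}(θ) = (1/√π)(Γ(m/2)/Γ((m-1)/2)) sin^{m-2}θ. -/
open Real

/-- `p^{(m)}(θ) = (1/√π) · (Γ(m/2)/Γ((m-1)/2)) · sin^{m-2} θ`. -/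
noncomputable def angleDensity (m : ℕ) (θ : ℝ) : ℝ :=
  (1 / Real.sqrt π) * (Real.Gamma ((m : ℝ) / 2) / Real.Gamma (((m : ℝ) - 1) / 2)) *
    Real.sin θ ^ (m - 2)

/-- Midpoint log-convexity of the Gamma function in multiplicative form. -/
lemma gamma_midpoint_sq_le {x y : ℝ} (hx : 0 < x) (hy : 0 < y) :
    Real.Gamma ((x + y) / 2) ^ 2 ≤ Real.Gamma x * Real.Gamma y := by
  have h := Real.Gamma_mul_add_mul_le_rpow_Gamma_mul_rpow_Gamma hx hy
    (by norm_num : (0:ℝ) < 1/2) (by norm_num : (0:ℝ) < 1/2) (by norm_num)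
  have h' : Real.Gamma ((x + y) / 2) ≤
      Real.Gamma x ^ ((1:ℝ)/2) * Real.Gamma y ^ ((1:ℝ)/2) := by
    have e : (1/2 : ℝ) * x + (1/2 : ℝ) * y = (x + y) / 2 := by ring
    rwa [e] at h
  have hg : 0 ≤ Real.Gamma ((x + y) / 2) :=
    (Real.Gamma_pos_of_pos (by positivity)).le
  calc Real.Gamma ((x + y) / 2) ^ 2
      ≤ (Real.Gamma x ^ ((1:ℝ)/2) * Real.Gamma y ^ ((1:ℝ)/2)) ^ 2 :=
        pow_le_pow_left₀ hg h' 2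
    _ = Real.Gamma x * Real.Gamma y := by
        rw [mul_pow, ← Real.rpow_natCast (Real.Gamma x ^ ((1:ℝ)/2)) 2,
          ← Real.rpow_natCast (Real.Gamma y ^ ((1:ℝ)/2)) 2,
          ← Real.rpow_mul (Real.Gamma_pos_of_pos hx).le,
          ← Real.rpow_mul (Real.Gamma_pos_of_pos hy).le]
        norm_num

/-- For `m ≥ 2`, with `s_m := Γ(m/2)² / (Γ((m-1)/2)Γ((m+1)/2))`, we have `s_m ∈ (0,1)`,
`p^{(m)}(θ) − p^{(m+1)}(θ) ≥ 0` when `sin θ ≤ s_m`, and `p^{(m)}(θ) − p^{(m+1)}(θ) < 0`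
when `s_m < sin θ ≤ 1`. -/
theorem stmt1 (m : ℕ) (hm : 2 ≤ m)
    (s : ℝ)
    (hs : s = Real.Gamma ((m : ℝ) / 2) ^ 2 /
      (Real.Gamma (((m : ℝ) - 1) / 2) * Real.Gamma (((m : ℝ) + 1) / 2))) :
    s ∈ Set.Ioo (0 : ℝ) 1 ∧
    ∀ θ ∈ Set.Icc (0 : ℝ) π,
      (Real.sin θ ≤ s → 0 ≤ angleDensity m θ - angleDensity (m + 1) θ) ∧
      (s < Real.sin θ → Real.sin θ ≤ 1 →
        angleDensity m θ - angleDensity (m + 1) θ < 0) := by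
  have hm2 : (2:ℝ) ≤ (m:ℝ) := by exact_mod_cast hm
  obtain ⟨a, ha_def⟩ : ∃ a : ℝ, a = ((m:ℝ) - 1) / 2 := ⟨_, rfl⟩
  have ha : 0 < a := by rw [ha_def]; linarith
  have ha2 : 0 < a + 1/2 := by linarith
  obtain ⟨A, hA_def⟩ : ∃ A : ℝ, A = Real.Gamma a := ⟨_, rfl⟩
  obtain ⟨B, hB_def⟩ : ∃ B : ℝ, B = Real.Gamma (a + 1/2) := ⟨_, rfl⟩
  have hA : 0 < A := hA_def ▸ Real.Gamma_pos_of_pos ha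
  have hB : 0 < B := hB_def ▸ Real.Gamma_pos_of_pos ha2
  have hG1 : Real.Gamma ((m:ℝ)/2) = B := by
    rw [show (m:ℝ)/2 = a + 1/2 by rw [ha_def]; ring, hB_def]
  have hG2 : Real.Gamma (((m:ℝ) - 1)/2) = A := by rw [← ha_def, hA_def]
  have hG3 : Real.Gamma (((m:ℝ) + 1)/2) = a * A := by
    rw [show ((m:ℝ) + 1)/2 = a + 1 by rw [ha_def]; ring,
      Real.Gamma_add_one ha.ne', hA_def]
  have hs' : s = B^2 / (A * (a * A)) := by rw [hs, hG1, hG2, hG3]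
  -- key inequality from log-convexity at (a+1, a+2)
  have key : Real.Gamma (a + 3/2) ^ 2 ≤ Real.Gamma (a+1) * Real.Gamma (a+2) := by
    have h := gamma_midpoint_sq_le (x := a+1) (y := a+2) (by linarith) (by linarith)
    rwa [show ((a+1) + (a+2))/2 = a + 3/2 by ring] at h
  have hg32 : Real.Gamma (a + 3/2) = (a + 1/2) * B := by
    rw [show a + 3/2 = (a + 1/2) + 1 by ring, Real.Gamma_add_one ha2.ne', hB_def]
  have hg1' : Real.Gamma (a + 1) = a * A := by rw [Real.Gamma_add_one ha.ne', hA_def]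
  have hg2' : Real.Gamma (a + 2) = (a+1) * (a * A) := by
    rw [show a + 2 = (a + 1) + 1 by ring, Real.Gamma_add_one (by linarith), hg1']
  rw [hg32, hg1', hg2'] at key
  have hspos : 0 < s := by rw [hs']; positivity
  have hslt1 : s < 1 := by
    rw [hs', div_lt_one (by positivity)]
    nlinarith [key, mul_pos ha (mul_pos hA hA), sq_nonneg (a + 1/2), sq_nonneg B]
  have haABpos : 0 < a * A / B := div_pos (mul_pos ha hA) hB
  have hprod : (a * A / B) * s = B / A := by
    rw [hs']; field_simp
  refine ⟨⟨hspos, hslt1⟩, ?_⟩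
  intro θ hθ
  have hsin0 : 0 ≤ Real.sin θ := Real.sin_nonneg_of_nonneg_of_le_pi hθ.1 hθ.2
  have hk1 : m + 1 - 2 = (m - 2) + 1 := by omega
  have hdiff : angleDensity m θ - angleDensity (m+1) θ
      = (1 / Real.sqrt π) * Real.sin θ ^ (m - 2)
        * (B / A - (a * A / B) * Real.sin θ) := by
    simp only [angleDensity]
    rw [hk1]
    push_cast
    rw [hG1, hG2, show Real.Gamma (((m:ℝ) + 1)/2) = a * A from hG3,
      show Real.Gamma (((m:ℝ) + 1 - 1)/2) = B by
        rw [show ((m:ℝ) + 1 - 1)/2 = (m:ℝ)/2 by ring, hG1]]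
    ring
  constructor
  · intro hsle
    rw [hdiff]
    have h1 : (a * A / B) * Real.sin θ ≤ B / A := by
      calc (a * A / B) * Real.sin θ ≤ (a * A / B) * s :=
            mul_le_mul_of_nonneg_left hsle haABpos.le
        _ = B / A := hprod
    exact mul_nonneg (mul_nonneg (by positivity) (pow_nonneg hsin0 _)) (by linarith)
  · intro hlt _
    rw [hdiff]
    have hsp : 0 < Real.sin θ := lt_trans hspos hlt
    have h1 : B / A < (a * A / B) * Real.sin θ := by
      calc B / A = (a * A / B) * s := hprod.symm
        _ < (a * A / B) * Real.sin θ := by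
            exact mul_lt_mul_of_pos_left hlt haABpos
    apply mul_neg_of_pos_of_neg (mul_pos (by positivity) (pow_pos hsp _))
    linarith
end

section
/- Let m ≥ 2 and let μ be a probability measure supported on the closed ball B_r(0) ⊂ ℝ^m that is invariant under all rotations about the origin. Let y be a random vector with law μ. Then z = 0 is the unique point achieving min{ E d(z, y) : z ∈ B_r(0) }, where d is the Euclidean distance. In fact, for every unit vector v, the function t ↦ E d(tv, y) has strictly positive derivative for all t ∈ (0, r). -/
open MeasureTheory Metric
open scoped RealInnerProductSpace

/-!
Differentiating under the integral sign, the derivative of `t ↦ ∫ ‖t • v - y‖ ∂μ` is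
`∫ ψ ∂μ` with `ψ y = ⟪t • v - y, v⟫ / ‖t • v - y‖`. This needs `μ {t • v} = 0`: by rotation
invariance all points of a sphere carry the same mass, and for `m ≥ 2` a sphere is infinite.

Averaging `ψ` with `ψ ∘ S`, where `S` is the reflection sending `v` to `-v`, and writing
`P = t • v - y`, `Q = t • v + y` (so `P + Q = (2 * t) • v`), gives
`(2 * t)⁻¹ * ((‖Q‖ + ⟪P, Q⟫ / ‖P‖) + (‖P‖ + ⟪P, Q⟫ / ‖Q‖))`. This is nonnegative by
Cauchy–Schwarz, and positive unless `P` and `Q` are antiparallel, i.e. unless `y` lies on the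
line `ℝ ∙ v` outside the open ball of radius `t`. That set has measure at most `1 / 2`, because a
reflection sending `v` to an orthogonal unit vector maps it to a disjoint set of the same measure.
-/

theorem HasDerivAt.norm {F : Type*} [NormedAddCommGroup F] [InnerProductSpace ℝ F]
    {f : ℝ → F} {f' : F} {x : ℝ} (hf : HasDerivAt f f' x) (h0 : f x ≠ 0) :
    HasDerivAt (‖f ·‖) (⟪f x, f'⟫ / ‖f x‖) x := by
  have h := hf.norm_sq.sqrt (by positivity)
  simp only [Real.sqrt_sq (norm_nonneg _)] at h
  convert h using 1
  field_simp

section InnerProductSpace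

variable {E : Type*} [NormedAddCommGroup E] [InnerProductSpace ℝ E]

theorem inner_add_div_norm (P Q : E) : ⟪P, P + Q⟫ / ‖P‖ = ‖P‖ + ⟪P, Q⟫ / ‖P‖ := by
  rw [inner_add_right, real_inner_self_eq_norm_sq, add_div, sq, mul_self_div_self]

theorem norm_add_inner_div_norm_nonneg (P Q : E) : 0 ≤ ‖Q‖ + ⟪P, Q⟫ / ‖P‖ := by
  rcases eq_or_ne P 0 with rfl | hP
  · simp
  have : -‖Q‖ ≤ ⟪P, Q⟫ / ‖P‖ := by
    rw [le_div_iff₀ (norm_pos_iff.2 hP)]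
    linarith [neg_le_of_abs_le (abs_real_inner_le_norm P Q)]
  linarith

theorem norm_add_inner_div_norm_pos {P Q : E} (hP : P ≠ 0) (h : ⟪P, Q⟫ ≠ -(‖P‖ * ‖Q‖)) :
    0 < ‖Q‖ + ⟪P, Q⟫ / ‖P‖ := by
  have : -‖Q‖ < ⟪P, Q⟫ / ‖P‖ := by
    rw [lt_div_iff₀ (norm_pos_iff.2 hP)]
    linarith [lt_of_le_of_ne (neg_le_of_abs_le (abs_real_inner_le_norm P Q)) h.symm]
  linarith

theorem inner_sub_div_norm_add_inner_add_div_norm (v y : E) {t : ℝ} (ht : t ≠ 0) :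
    ⟪t • v - y, v⟫ / ‖t • v - y‖ + ⟪t • v + y, v⟫ / ‖t • v + y‖ =
      (2 * t)⁻¹ * ((‖t • v + y‖ + ⟪t • v - y, t • v + y⟫ / ‖t • v - y‖) +
        (‖t • v - y‖ + ⟪t • v + y, t • v - y⟫ / ‖t • v + y‖)) := by
  set P := t • v - y
  set Q := t • v + y
  have hv : v = (2 * t)⁻¹ • (P + Q) := by
    rw [show P + Q = (2 * t) • v by simp only [P, Q]; module, smul_smul,
      inv_mul_cancel₀ (by positivity), one_smul]
  rw [hv, real_inner_smul_right, real_inner_smul_right, mul_div_assoc, mul_div_assoc,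
    inner_add_div_norm, add_comm P Q, inner_add_div_norm]
  ring

theorem inner_sub_div_norm_add_inner_add_div_norm_nonneg (v y : E) {t : ℝ} (ht : 0 < t) :
    0 ≤ ⟪t • v - y, v⟫ / ‖t • v - y‖ + ⟪t • v + y, v⟫ / ‖t • v + y‖ := by
  rw [inner_sub_div_norm_add_inner_add_div_norm v y ht.ne']
  have := norm_add_inner_div_norm_nonneg (t • v - y) (t • v + y)
  have := norm_add_inner_div_norm_nonneg (t • v + y) (t • v - y)
  positivity

theorem mem_span_singleton_diff_ball_of_inner_eq_neg {v y : E} (hv : ‖v‖ = 1) {t : ℝ}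
    (ht : 0 < t) (h : ⟪t • v - y, t • v + y⟫ = -(‖t • v - y‖ * ‖t • v + y‖)) :
    y ∈ (ℝ ∙ v : Set E) \ ball 0 t := by
  rw [Set.mem_sdiff, mem_ball_zero_iff, not_lt]
  set p := ‖t • v - y‖
  set q := ‖t • v + y‖
  have hpq : ‖t • v + y‖ • (-(t • v - y)) = ‖-(t • v - y)‖ • (t • v + y) := by
    rw [← inner_eq_norm_mul_iff_real, inner_neg_left, norm_neg, h, neg_neg]
  have hy : (q - p) • y = (t * (q + p)) • v := by
    rw [norm_neg] at hpq
    linear_combination (norm := module) hpq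
  rcases eq_or_ne q p with hqp | hqp
  · have hp : p = 0 := by
      rw [hqp, sub_self, zero_smul, eq_comm, smul_eq_zero] at hy
      rcases hy with h0 | h0
      · nlinarith [norm_nonneg (t • v - y)]
      · simp [h0] at hv
    obtain rfl : y = t • v := (sub_eq_zero.1 (norm_eq_zero.1 hp)).symm
    exact ⟨Submodule.smul_mem _ _ (Submodule.mem_span_singleton_self v), by
      rw [norm_smul, hv, mul_one, Real.norm_of_nonneg ht.le]⟩
  · have hy' : y = ((q - p)⁻¹ * (t * (q + p))) • v := by
      rw [← smul_smul, ← hy, smul_smul, inv_mul_cancel₀ (sub_ne_zero.2 hqp), one_smul]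
    refine ⟨Submodule.mem_span_singleton.2 ⟨_, hy'.symm⟩, ?_⟩
    have hn := congrArg norm hy
    rw [norm_smul, norm_smul, hv, mul_one, Real.norm_eq_abs, Real.norm_eq_abs,
      abs_of_nonneg (by positivity : 0 ≤ t * (q + p))] at hn
    have : |q - p| ≤ q + p := abs_sub_le_iff.2
      ⟨by linarith [norm_nonneg (t • v - y)], by linarith [norm_nonneg (t • v + y)]⟩
    have : 0 < |q - p| := abs_pos.2 (sub_ne_zero.2 hqp)
    nlinarith

theorem inner_sub_div_norm_add_inner_add_div_norm_pos {v y : E} (hv : ‖v‖ = 1) {t : ℝ}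
    (ht : 0 < t) (hy : y ∉ (ℝ ∙ v : Set E) \ ball 0 t) :
    0 < ⟪t • v - y, v⟫ / ‖t • v - y‖ + ⟪t • v + y, v⟫ / ‖t • v + y‖ := by
  have hmem : ∀ s : ℝ, |s| = t → s • v ≠ y := fun s hs h => hy <| h ▸
    ⟨Submodule.smul_mem _ s (Submodule.mem_span_singleton_self v), by simp [norm_smul, hv, hs]⟩
  have hP : t • v - y ≠ 0 := sub_ne_zero.2 (hmem t (abs_of_pos ht))
  have hQ : t • v + y ≠ 0 := fun h =>
    hmem (-t) (by rw [abs_neg, abs_of_pos ht]) (by rw [neg_smul, neg_eq_iff_add_eq_zero, h])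
  have hPQ : ⟪t • v - y, t • v + y⟫ ≠ -(‖t • v - y‖ * ‖t • v + y‖) := fun h =>
    hy (mem_span_singleton_diff_ball_of_inner_eq_neg hv ht h)
  rw [inner_sub_div_norm_add_inner_add_div_norm v y ht.ne']
  have := norm_add_inner_div_norm_pos hP hPQ
  have := norm_add_inner_div_norm_pos hQ
    (by rwa [real_inner_comm, mul_comm] : ⟪t • v + y, t • v - y⟫ ≠ -(‖t • v + y‖ * ‖t • v - y‖))
  positivity

theorem exists_norm_eq_one_mem_orthogonal [FiniteDimensional ℝ E]
    (hE : 2 ≤ Module.finrank ℝ E) (v : E) : ∃ w ∈ (ℝ ∙ v)ᗮ, ‖w‖ = 1 := by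
  have hv : Module.finrank ℝ (ℝ ∙ v) ≤ 1 := (finrank_span_le_card ({v} : Set E)).trans (by simp)
  have hsum := (ℝ ∙ v).finrank_add_finrank_orthogonal
  obtain ⟨w, hw, hw0⟩ := Submodule.exists_mem_ne_zero_of_ne_bot (p := (ℝ ∙ v)ᗮ) fun h => by
    rw [h, finrank_bot] at hsum
    omega
  exact ⟨‖w‖⁻¹ • w, Submodule.smul_mem _ _ hw, norm_smul_inv_norm hw0⟩

end InnerProductSpace

section MetricSpace

variable {X : Type*} [PseudoMetricSpace X] [MeasurableSpace X] {μ : Measure X}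
  [IsProbabilityMeasure μ]

theorem integrable_dist_of_measure_closedBall_eq_one [OpensMeasurableSpace X] {x₀ : X} {r : ℝ}
    (hsupp : μ (closedBall x₀ r) = 1) (z : X) : Integrable (dist z) μ := by
  have hball : ∀ᵐ y ∂μ, y ∈ closedBall x₀ r :=
    (ae_iff_measure_eq measurableSet_closedBall.nullMeasurableSet).2
      (by rw [measure_univ]; exact hsupp)
  refine Integrable.of_bound (continuous_const.dist continuous_id).aestronglyMeasurable
    (dist z x₀ + r) ?_
  filter_upwards [hball] with y hy
  rw [Real.norm_of_nonneg dist_nonneg]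
  linarith [dist_triangle z x₀ y, mem_closedBall'.1 hy]

theorem lipschitzWith_integral_dist (hint : ∀ z : X, Integrable (dist z) μ) :
    LipschitzWith 1 fun z => ∫ y, dist z y ∂μ := by
  refine LipschitzWith.of_dist_le_mul fun z z' => ?_
  rw [NNReal.coe_one, one_mul, Real.dist_eq, ← integral_sub (hint z) (hint z')]
  calc |∫ y, (dist z y - dist z' y) ∂μ| ≤ ∫ y, |dist z y - dist z' y| ∂μ :=
        abs_integral_le_integral_abs
    _ ≤ ∫ _, dist z z' ∂μ :=
        integral_mono ((hint z).sub (hint z')).abs (integrable_const _)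
          fun y => abs_dist_sub_le z z' y
    _ = dist z z' := by simp

end MetricSpace

section Measure

variable {E : Type*} [NormedAddCommGroup E] [InnerProductSpace ℝ E]
  [MeasurableSpace E] [BorelSpace E] {μ : Measure E}

theorem measure_singleton_eq_of_norm_eq (hrot : ∀ R : E ≃ₗᵢ[ℝ] E, μ.map R = μ) {x x' : E}
    (h : ‖x‖ = ‖x'‖) : μ {x} = μ {x'} := by
  set R := (ℝ ∙ (x - x'))ᗮ.reflection
  have hR : R ⁻¹' {x'} = {x} := by
    rw [← Submodule.reflection_sub h, ← Set.image_singleton, R.injective.preimage_image]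
  rw [← hR]
  exact (⟨R.continuous.measurable, hrot R⟩ : MeasurePreserving R μ μ).measure_preimage
    (measurableSet_singleton _).nullMeasurableSet

theorem hasDerivAt_integral_dist_smul [IsFiniteMeasure μ] {v : E} (hv : ‖v‖ = 1) {t : ℝ}
    (hint : Integrable (dist (t • v)) μ) (hatom : μ {t • v} = 0) :
    Integrable (fun y => ⟪t • v - y, v⟫ / ‖t • v - y‖) μ ∧
      HasDerivAt (fun s : ℝ => ∫ y, dist (s • v) y ∂μ)
        (∫ y, ⟪t • v - y, v⟫ / ‖t • v - y‖ ∂μ) t := by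
  have hlip : ∀ y : E, LipschitzWith 1 fun s : ℝ => dist (s • v) y := fun y =>
    LipschitzWith.of_dist_le_mul fun s s' => by
      rw [NNReal.coe_one, one_mul]
      calc dist (dist (s • v) y) (dist (s' • v) y) ≤ dist (s • v) (s' • v) :=
            dist_dist_dist_le_left _ _ _
        _ = dist s s' := by
            rw [dist_eq_norm, ← sub_smul, norm_smul, hv, mul_one, Real.dist_eq,
              Real.norm_eq_abs]
  have hdiff : ∀ᵐ y ∂μ, HasDerivAt (fun s : ℝ => dist (s • v) y)
      (⟪t • v - y, v⟫ / ‖t • v - y‖) t := by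
    filter_upwards [measure_eq_zero_iff_ae_notMem.1 hatom] with y hy
    simp only [dist_eq_norm]
    simpa using (((hasDerivAt_id t).smul_const v).sub_const y).norm
      (sub_ne_zero.2 fun h => hy h.symm)
  exact hasDerivAt_integral_of_dominated_loc_of_lip (bound := fun _ => 1) Filter.univ_mem
    (.of_forall fun s => (continuous_const.dist continuous_id).aestronglyMeasurable) hint
    (by fun_prop : Measurable fun y : E => ⟪t • v - y, v⟫ / ‖t • v - y‖).aestronglyMeasurable
    (.of_forall fun y => by simpa using hlip y) (integrable_const 1) hdiff

variable [FiniteDimensional ℝ E]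

theorem measure_singleton_eq_zero (hE : 2 ≤ Module.finrank ℝ E) [IsFiniteMeasure μ]
    (hrot : ∀ R : E ≃ₗᵢ[ℝ] E, μ.map R = μ) {x : E} (hx : x ≠ 0) : μ {x} = 0 := by
  have hS : (sphere (0 : E) ‖x‖).Infinite := by
    refine (isConnected_sphere ?_ 0 (norm_nonneg x)).isPreconnected.infinite_of_nontrivial
      ⟨x, by simp, -x, by simp, fun h => hx ?_⟩
    · rw [← Module.finrank_eq_rank]
      exact_mod_cast hE
    · rw [eq_neg_iff_add_eq_zero, ← two_smul ℝ, smul_eq_zero] at h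
      exact h.resolve_left two_ne_zero
  let f := hS.natEmbedding
  by_contra hμx
  have hdisj : Pairwise (Function.onFun Disjoint fun k => ({(f k : E)} : Set E)) :=
    fun j k hjk => Set.disjoint_singleton.2 fun h => hjk (f.injective (Subtype.ext h))
  have hunion := measure_iUnion (μ := μ) hdisj fun _ => measurableSet_singleton _
  rw [tsum_congr fun k => measure_singleton_eq_of_norm_eq hrot
    (mem_sphere_zero_iff_norm.1 (f k).2), ENNReal.tsum_const_eq_top_of_ne_zero hμx] at hunion
  exact measure_ne_top μ _ hunion

variable [IsProbabilityMeasure μ]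

theorem measure_compl_span_singleton_diff_ball_pos (hE : 2 ≤ Module.finrank ℝ E)
    (hrot : ∀ R : E ≃ₗᵢ[ℝ] E, μ.map R = μ) {v : E} (hv : ‖v‖ = 1)
    {t : ℝ} (ht : 0 < t) : 0 < μ ((ℝ ∙ v : Set E) \ ball 0 t)ᶜ := by
  set Z := (ℝ ∙ v : Set E) \ ball 0 t
  have hZ : MeasurableSet Z :=
    (Submodule.closed_of_finiteDimensional _).measurableSet.diff measurableSet_ball
  obtain ⟨w, hw, hw1⟩ := exists_norm_eq_one_mem_orthogonal hE v
  set R := (ℝ ∙ (v - w))ᗮ.reflection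
  have hRv : R v = w := Submodule.reflection_sub (hv.trans hw1.symm)
  have hdisj : Disjoint Z (R ⁻¹' Z) := by
    rw [Set.disjoint_left]
    rintro y ⟨hyv, hyt⟩ ⟨hRy, -⟩
    obtain ⟨s, rfl⟩ := Submodule.mem_span_singleton.1 hyv
    have hRy' : R (s • v) ∈ (ℝ ∙ v)ᗮ := by
      rw [map_smul, hRv]
      exact Submodule.smul_mem _ _ hw
    have h0 : R (s • v) = 0 := by
      simpa [Submodule.inf_orthogonal_eq_bot] using Submodule.mem_inf.2 ⟨hRy, hRy'⟩
    rw [mem_ball_zero_iff, ← R.norm_map, h0, norm_zero] at hyt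
    exact hyt ht
  have hR : μ (R ⁻¹' Z) = μ Z :=
    (⟨R.continuous.measurable, hrot R⟩ : MeasurePreserving R μ μ).measure_preimage
      hZ.nullMeasurableSet
  have hsum : μ Z + μ Z ≤ 1 := by
    calc μ Z + μ Z = μ (Z ∪ R ⁻¹' Z) := by
          rw [measure_union hdisj (hZ.preimage R.continuous.measurable), hR]
      _ ≤ 1 := prob_le_one
  rw [prob_compl_eq_one_sub hZ, tsub_pos_iff_lt]
  refine lt_of_le_of_ne prob_le_one fun h => ?_
  rw [h] at hsum
  norm_num at hsum

theorem integral_inner_sub_div_norm_pos (hE : 2 ≤ Module.finrank ℝ E)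
    (hrot : ∀ R : E ≃ₗᵢ[ℝ] E, μ.map R = μ) {v : E} (hv : ‖v‖ = 1) {t : ℝ} (ht : 0 < t)
    (hψ : Integrable (fun y => ⟪t • v - y, v⟫ / ‖t • v - y‖) μ) :
    0 < ∫ y, ⟪t • v - y, v⟫ / ‖t • v - y‖ ∂μ := by
  set ψ : E → ℝ := fun y => ⟪t • v - y, v⟫ / ‖t • v - y‖
  set S := (ℝ ∙ v)ᗮ.reflection
  have hS : MeasurePreserving S μ μ := ⟨S.continuous.measurable, hrot S⟩
  have hSv : S v = -v := Submodule.reflection_orthogonalComplement_singleton_eq_neg v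
  have hψS : ∀ y, ψ (S y) = ⟪t • v + y, v⟫ / ‖t • v + y‖ := fun y => by
    have h1 : t • v - S y = S (-(t • v + y)) := by
      rw [map_neg, map_add, map_smul, hSv]
      module
    have h2 : ⟪S (-(t • v + y)), v⟫ = ⟪t • v + y, v⟫ := by
      calc ⟪S (-(t • v + y)), v⟫ = -⟪S (-(t • v + y)), S v⟫ := by
            rw [hSv, inner_neg_right, neg_neg]
        _ = ⟪t • v + y, v⟫ := by rw [S.inner_map_map, inner_neg_left, neg_neg]
    simp only [ψ, h1, h2, S.norm_map, norm_neg]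
  have hψSint : Integrable (fun y => ψ (S y)) μ := hS.integrable_comp_of_integrable hψ
  have hsum : 0 < ∫ y, (ψ y + ψ (S y)) ∂μ := by
    rw [integral_pos_iff_support_of_nonneg (f := fun y => ψ y + ψ (S y)) (fun y => by
      simp only [Pi.zero_apply, hψS]
      exact inner_sub_div_norm_add_inner_add_div_norm_nonneg v y ht) (hψ.add hψSint)]
    refine (measure_compl_span_singleton_diff_ball_pos hE hrot hv ht).trans_le
      (measure_mono fun y hy => ?_)
    rw [Function.mem_support, hψS]
    exact (inner_sub_div_norm_add_inner_add_div_norm_pos hv ht hy).ne'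
  rw [integral_add hψ hψSint, hS.integral_comp S.toHomeomorph.measurableEmbedding] at hsum
  linarith

theorem deriv_integral_dist_smul_pos (hE : 2 ≤ Module.finrank ℝ E)
    (hrot : ∀ R : E ≃ₗᵢ[ℝ] E, μ.map R = μ) {v : E} (hv : ‖v‖ = 1) {t : ℝ} (ht : 0 < t)
    (hint : Integrable (dist (t • v)) μ) :
    0 < deriv (fun s : ℝ => ∫ y, dist (s • v) y ∂μ) t := by
  have hv0 : v ≠ 0 := norm_ne_zero_iff.1 (hv ▸ one_ne_zero)
  obtain ⟨hψ, hderiv⟩ := hasDerivAt_integral_dist_smul hv hint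
    (measure_singleton_eq_zero hE hrot (smul_ne_zero ht.ne' hv0))
  rw [hderiv.deriv]
  exact integral_inner_sub_div_norm_pos hE hrot hv ht hψ

theorem strictMonoOn_integral_dist_smul (hE : 2 ≤ Module.finrank ℝ E)
    (hrot : ∀ R : E ≃ₗᵢ[ℝ] E, μ.map R = μ) (hint : ∀ z : E, Integrable (dist z) μ)
    {v : E} (hv : ‖v‖ = 1) :
    StrictMonoOn (fun s : ℝ => ∫ y, dist (s • v) y ∂μ) (Set.Ici 0) := by
  refine strictMonoOn_of_deriv_pos (convex_Ici 0) ?_ fun t ht => ?_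
  · exact ((lipschitzWith_integral_dist hint).continuous.comp
      (continuous_id.smul continuous_const)).continuousOn
  · rw [interior_Ici] at ht
    exact deriv_integral_dist_smul_pos hE hrot hv ht (hint _)

end Measure

theorem stmt6_general (m : ℕ) (hm : 2 ≤ m) (r : ℝ)
    (μ : Measure (EuclideanSpace ℝ (Fin m))) [IsProbabilityMeasure μ]
    (hsupp : μ (closedBall 0 r) = 1)
    (hrot : ∀ R : EuclideanSpace ℝ (Fin m) ≃ₗᵢ[ℝ] EuclideanSpace ℝ (Fin m),
      μ.map R = μ) :
    (∀ z ∈ closedBall (0 : EuclideanSpace ℝ (Fin m)) r, z ≠ 0 →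
      (∫ y, dist (0 : EuclideanSpace ℝ (Fin m)) y ∂μ) < ∫ y, dist z y ∂μ) ∧
    ∀ v : EuclideanSpace ℝ (Fin m), ‖v‖ = 1 → ∀ t ∈ Set.Ioo (0 : ℝ) r,
      0 < deriv (fun t : ℝ => ∫ y, dist (t • v) y ∂μ) t := by
  have hE : 2 ≤ Module.finrank ℝ (EuclideanSpace ℝ (Fin m)) := by
    rwa [finrank_euclideanSpace_fin]
  have hint := integrable_dist_of_measure_closedBall_eq_one hsupp
  refine ⟨fun z _ hz => ?_, fun v hv t ht =>
    deriv_integral_dist_smul_pos hE hrot hv ht.1 (hint _)⟩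
  have hlt := strictMonoOn_integral_dist_smul hE hrot hint (norm_smul_inv_norm (𝕜 := ℝ) hz)
    Set.self_mem_Ici (norm_nonneg z) (norm_pos_iff.2 hz)
  simpa [smul_smul, mul_inv_cancel₀ (norm_ne_zero_iff.2 hz)] using hlt

/-- Let `m ≥ 2` and let `μ` be a rotation-invariant probability measure supported on the
closed ball `B_r(0) ⊂ ℝ^m`. Then `z = 0` is the unique minimizer over `B_r(0)` of
`z ↦ E d(z,y)`; in fact, for every unit vector `v`, the function `t ↦ E d(tv, y)` has
strictly positive derivative on `(0, r)`. -/
theorem stmt6 (m : ℕ) (hm : 2 ≤ m) (r : ℝ) (hr : 0 < r)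
    (μ : Measure (EuclideanSpace ℝ (Fin m))) [IsProbabilityMeasure μ]
    (hsupp : μ (closedBall 0 r) = 1)
    (hrot : ∀ R : EuclideanSpace ℝ (Fin m) ≃ₗᵢ[ℝ] EuclideanSpace ℝ (Fin m),
      μ.map R = μ) :
    (∀ z ∈ closedBall (0 : EuclideanSpace ℝ (Fin m)) r, z ≠ 0 →
      (∫ y, dist (0 : EuclideanSpace ℝ (Fin m)) y ∂μ) < ∫ y, dist z y ∂μ) ∧
    ∀ v : EuclideanSpace ℝ (Fin m), ‖v‖ = 1 → ∀ t ∈ Set.Ioo (0 : ℝ) r,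
      0 < deriv (fun t : ℝ => ∫ y, dist (t • v) y ∂μ) t :=
  stmt6_general m hm r μ hsupp hrot
end

section
/- Let μ^s denote the uniform probability measure on the sphere S^{m-1}_s(0) of radius s ≥ 0 in ℝ^m, let r, α > 0 with α > r, let s ∈ [0, r], let v be a unit vector, and let t ∈ [0, r]. Define H^{(α,μ^s,m)}(tv) := ∫_{B_r(0)}(α − ‖x‖) dμ^s(x) − ∫_{B_α(tv) ∩ B_r(0)}(α − d(tv,x)) dμ^s(x). Then: (1) if s = 0, H^{(α,μ^s,m)}(tv) = t; (2) if 0 < s ≤ α − t, H^{(α,μ^s,m)}(tv) = E d(tv, x) − s where x ~ μ^s; (3) if s ≥ α − t, H^{(α,μ^s,m)}(tv) = α − s − ∫_0^{θ̄}(α − √(s² + t² − 2st cos θ)) dμ̃(θ), where θ̄ = arccos((s² + t² − α²)/(2st)) ≤ π and μ̃ is the law of the angle between v and a uniformly random point on the unit sphere. -/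
/-!
Since `μ^s` lives on the sphere of radius `s ≤ r`, the first integral is `α - s` and the
constraint `x ∈ B_r(0)` can be dropped from the second. If `s ≤ α - t` the sphere lies inside
`B_α(tv)`, so the second integral is `α - E d(tv, x)`. Otherwise `μ^s` is the image of `μ^1`
under `y ↦ s y`, the law of cosines gives `d(tv, sy) = √(s² + t² - 2st cos θ)` with `θ` the
angle between `v` and `y`, and `sy ∈ B_α(tv)` exactly when `θ ≤ θ̄`.

That `μ^s` is a probability measure rests on `0 < μH[m-1] (S^{m-1}) < ∞`: the orthogonal
projection onto a hyperplane is `1`-Lipschitz and maps the sphere onto a unit ball, and the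
two hemispheres are Lipschitz images of a compact ball under inverse stereographic projections.
-/

open MeasureTheory Metric Real
open scoped ENNReal RealInnerProductSpace

/-- The uniform probability measure on the sphere of radius `s` centered at the origin
in `ℝ^m`; for `s = 0` it is the Dirac measure at the origin. -/
noncomputable def sphereUniform (m : ℕ) (s : ℝ) : Measure (EuclideanSpace ℝ (Fin m)) :=
  if s = 0 then Measure.dirac 0
  else (μH[(m : ℝ) - 1] (sphere (0 : EuclideanSpace ℝ (Fin m)) s))⁻¹ •
    (μH[(m : ℝ) - 1]).restrict (sphere (0 : EuclideanSpace ℝ (Fin m)) s)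

/-- `H^{(α,μ,m)}(z) = ∫_{B_r(0)} (α − ‖x‖) dμ(x) − ∫_{B_α(z) ∩ B_r(0)} (α − d(z,x)) dμ(x)`. -/
noncomputable def Hfun (m : ℕ) (α r : ℝ) (μ : Measure (EuclideanSpace ℝ (Fin m)))
    (z : EuclideanSpace ℝ (Fin m)) : ℝ :=
  (∫ x in closedBall (0 : EuclideanSpace ℝ (Fin m)) r, (α - ‖x‖) ∂μ) -
    ∫ x in closedBall z α ∩ closedBall (0 : EuclideanSpace ℝ (Fin m)) r,
      (α - dist z x) ∂μ

open ProbabilityTheory Module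
open scoped NNReal

section HausdorffMeasureSphere

variable {E : Type*} [NormedAddCommGroup E] [InnerProductSpace ℝ E]

lemma inner_stereoInvFunAux {v w : E} (hv : ‖v‖ = 1) (hw : w ∈ (ℝ ∙ v)ᗮ) :
    ⟪v, stereoInvFunAux v w⟫ = (‖w‖ ^ 2 - 4) / (‖w‖ ^ 2 + 4) := by
  rw [Submodule.mem_orthogonal_singleton_iff_inner_right] at hw
  simp only [stereoInvFunAux_apply, inner_smul_right, inner_add_right, hw,
    real_inner_self_eq_norm_sq, hv]
  field_simp
  ring

lemma sphere_inter_inner_nonpos_subset_image_stereoInvFunAux {v : E} (hv : ‖v‖ = 1) :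
    sphere (0 : E) 1 ∩ {x | ⟪v, x⟫ ≤ 0} ⊆
      (stereoInvFunAux v ∘ ((↑) : (ℝ ∙ v)ᗮ → E)) '' closedBall 0 2 := by
  rintro x ⟨hx, hvx : ⟪v, x⟫ ≤ 0⟩
  have hxv : x ≠ v := by
    rintro rfl
    norm_num [real_inner_self_eq_norm_sq, hv] at hvx
  have hx_eq : stereoInvFunAux v (stereoToFun v x) = x :=
    congrArg Subtype.val (stereo_left_inv hv (x := ⟨x, hx⟩) hxv)
  refine ⟨stereoToFun v x, ?_, hx_eq⟩
  have hinner := inner_stereoInvFunAux hv (stereoToFun v x).2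
  rw [hx_eq] at hinner
  rw [hinner, div_nonpos_iff] at hvx
  rw [mem_closedBall_zero_iff, Submodule.coe_norm]
  have := norm_nonneg (stereoToFun v x : E)
  rcases hvx with h | h <;> nlinarith

lemma exists_norm_eq_one_of_finrank_eq_succ {d : ℕ} (hd : finrank ℝ E = d + 1) :
    ∃ v : E, ‖v‖ = 1 := by
  have : Nontrivial E := nontrivial_of_finrank_eq_succ hd
  exact exists_norm_eq E zero_le_one

lemma closedBall_subset_orthogonalProjectionOnto_image_sphere {v : E} (hv : ‖v‖ = 1) :
    closedBall (0 : (ℝ ∙ v)ᗮ) 1 ⊆ (ℝ ∙ v)ᗮ.orthogonalProjectionOnto '' sphere (0 : E) 1 := by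
  intro w hw
  rw [mem_closedBall_zero_iff] at hw
  have hwv : ⟪(w : E), v⟫ = 0 := Submodule.mem_orthogonal_singleton_iff_inner_left.mp w.2
  refine ⟨w + √(1 - ‖w‖ ^ 2) • v, ?_, ?_⟩
  · rw [mem_sphere_zero_iff_norm, ← sq_eq_sq₀ (norm_nonneg _) zero_le_one, norm_add_sq_real,
      inner_smul_right, hwv, norm_smul, hv, Real.norm_eq_abs, abs_of_nonneg (Real.sqrt_nonneg _)]
    rw [mul_one, Real.sq_sqrt (by nlinarith [norm_nonneg w])]
    simp
  · simp [Submodule.orthogonalProjectionOnto_orthogonalComplement_singleton_eq_zero]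

variable [FiniteDimensional ℝ E] [MeasurableSpace E] [BorelSpace E]

lemma hausdorffMeasure_sphere_lt_top {d : ℕ} (hd : finrank ℝ E = d + 1) :
    μH[d] (sphere (0 : E) 1) < ∞ := by
  have : Fact (finrank ℝ E = d + 1) := ⟨hd⟩
  have hemisphere : ∀ u : E, ‖u‖ = 1 → μH[d] (sphere (0 : E) 1 ∩ {x | ⟪u, x⟫ ≤ 0}) < ∞ := by
    intro u hu
    have hK : finrank ℝ (ℝ ∙ u)ᗮ = d :=
      Submodule.finrank_orthogonal_span_singleton (norm_ne_zero_iff.mp (by simp [hu]))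
    have : IsFiniteMeasureOnCompacts (μH[d] : Measure (ℝ ∙ u)ᗮ) := by
      rw [← hK]; infer_instance
    obtain ⟨C, hC⟩ := ((contDiff_stereoInvFunAux (m := 1)).comp
      (ℝ ∙ u)ᗮ.subtypeL.contDiff).locallyLipschitz.locallyLipschitzOn
      |>.exists_lipschitzOnWith_of_compact (isCompact_closedBall (0 : (ℝ ∙ u)ᗮ) 2)
    calc μH[d] (sphere (0 : E) 1 ∩ {x | ⟪u, x⟫ ≤ 0})
        ≤ μH[d] ((stereoInvFunAux u ∘ ((↑) : (ℝ ∙ u)ᗮ → E)) '' closedBall 0 2) :=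
          measure_mono (sphere_inter_inner_nonpos_subset_image_stereoInvFunAux hu)
      _ ≤ (C : ℝ≥0∞) ^ (d : ℝ) * μH[d] (closedBall (0 : (ℝ ∙ u)ᗮ) 2) :=
          hC.hausdorffMeasure_image_le d.cast_nonneg
      _ < ∞ := ENNReal.mul_lt_top (by simp) (isCompact_closedBall _ _).measure_lt_top
  obtain ⟨v, hv⟩ := exists_norm_eq_one_of_finrank_eq_succ hd
  have hcover : sphere (0 : E) 1 ⊆
      (sphere 0 1 ∩ {x | ⟪v, x⟫ ≤ 0}) ∪ (sphere 0 1 ∩ {x | ⟪-v, x⟫ ≤ 0}) := by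
    intro x hx
    rcases le_total ⟪v, x⟫ 0 with h | h
    · exact Or.inl ⟨hx, h⟩
    · exact Or.inr ⟨hx, by simpa [inner_neg_left] using h⟩
  exact (measure_mono hcover).trans_lt ((measure_union_le _ _).trans_lt
    (ENNReal.add_lt_top.mpr ⟨hemisphere v hv, hemisphere (-v) (by simpa using hv)⟩))

lemma hausdorffMeasure_sphere_pos {d : ℕ} (hd : finrank ℝ E = d + 1) :
    0 < μH[d] (sphere (0 : E) 1) := by
  have : Fact (finrank ℝ E = d + 1) := ⟨hd⟩
  obtain ⟨v, hv⟩ := exists_norm_eq_one_of_finrank_eq_succ hd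
  have hK : finrank ℝ (ℝ ∙ v)ᗮ = d :=
    Submodule.finrank_orthogonal_span_singleton (norm_ne_zero_iff.mp (by simp [hv]))
  have : (μH[d] : Measure (ℝ ∙ v)ᗮ).IsOpenPosMeasure := by
    rw [← hK]; infer_instance
  calc 0 < μH[d] (closedBall (0 : (ℝ ∙ v)ᗮ) 1) := measure_closedBall_pos _ _ one_pos
    _ ≤ μH[d] ((ℝ ∙ v)ᗮ.orthogonalProjectionOnto '' sphere (0 : E) 1) :=
      measure_mono (closedBall_subset_orthogonalProjectionOnto_image_sphere hv)
    _ ≤ μH[d] (sphere (0 : E) 1) := by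
      simpa using (ℝ ∙ v)ᗮ.lipschitzWith_orthogonalProjectionOnto.hausdorffMeasure_image_le
        d.cast_nonneg (sphere (0 : E) 1)

end HausdorffMeasureSphere

section CondMeasure

variable {Ω Ω' : Type*} [MeasurableSpace Ω] [MeasurableSpace Ω']

lemma ProbabilityTheory.cond_smul_measure (μ : Measure Ω) (s : Set Ω) {c : ℝ≥0∞} (hc₀ : c ≠ 0)
    (hc : c ≠ ∞) : (c • μ)[|s] = μ[|s] := by
  rw [cond, cond, Measure.smul_apply, Measure.restrict_smul, smul_smul, smul_eq_mul,
    ENNReal.mul_inv (Or.inl hc₀) (Or.inl hc), mul_right_comm, ENNReal.inv_mul_cancel hc₀ hc,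
    one_mul]

lemma ProbabilityTheory.map_cond_preimage (μ : Measure Ω) {f : Ω → Ω'} (hf : Measurable f)
    {s : Set Ω'} (hs : MeasurableSet s) : (μ[|f ⁻¹' s]).map f = (μ.map f)[|s] := by
  rw [cond, cond, Measure.map_smul, Measure.restrict_map hf hs, Measure.map_apply hf hs]

end CondMeasure

lemma map_smul_hausdorffMeasure {E : Type*} [NormedAddCommGroup E] [NormedSpace ℝ E]
    [MeasurableSpace E] [BorelSpace E] {d : ℝ} (hd : 0 ≤ d) {c : ℝ} (hc : c ≠ 0) :
    (μH[d] : Measure E).map (c • ·) = ((‖c‖₊⁻¹ ^ d : ℝ≥0) : ℝ≥0∞) • μH[d] := by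
  ext A hA
  rw [Measure.map_apply (measurable_const_smul c) hA, Set.preimage_smul₀ hc,
    Measure.hausdorffMeasure_smul₀ hd (inv_ne_zero hc), nnnorm_inv, Measure.smul_apply,
    ENNReal.smul_def]

lemma sphereUniform_of_ne_zero (m : ℕ) {s : ℝ} (hs : s ≠ 0) :
    sphereUniform m s = μH[(m : ℝ) - 1][|sphere (0 : EuclideanSpace ℝ (Fin m)) s] :=
  if_neg hs

lemma ae_norm_eq_sphereUniform (m : ℕ) {s : ℝ} (hs : 0 ≤ s) :
    ∀ᵐ x ∂sphereUniform m s, ‖x‖ = s := by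
  rcases hs.eq_or_lt with rfl | hs
  · simp [sphereUniform]
  · rw [sphereUniform_of_ne_zero m hs.ne']
    filter_upwards [ae_cond_mem isClosed_sphere.measurableSet] with x hx
    exact mem_sphere_zero_iff_norm.mp hx

lemma sphereUniform_eq_map_smul {m : ℕ} (hm : 0 < m) {s : ℝ} (hs : 0 < s) :
    sphereUniform m s = (sphereUniform m 1).map (s • ·) := by
  have hpre : (s • ·) ⁻¹' sphere (0 : EuclideanSpace ℝ (Fin m)) s = sphere 0 1 := by
    ext x
    simp [norm_smul, abs_of_pos hs, hs.ne']
  rw [sphereUniform_of_ne_zero m hs.ne', sphereUniform_of_ne_zero m one_ne_zero, ← hpre,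
    map_cond_preimage _ (measurable_const_smul s) isClosed_sphere.measurableSet,
    map_smul_hausdorffMeasure (sub_nonneg.mpr (by exact_mod_cast hm)) hs.ne',
    cond_smul_measure _ _ _ ENNReal.coe_ne_top]
  exact ENNReal.coe_ne_zero.mpr (NNReal.rpow_pos (by simpa using hs.ne')).ne'

lemma isProbabilityMeasure_sphereUniform {m : ℕ} (hm : 0 < m) {s : ℝ} (hs : 0 ≤ s) :
    IsProbabilityMeasure (sphereUniform m s) := by
  rcases hs.eq_or_lt with rfl | hs
  · rw [sphereUniform, if_pos rfl]; infer_instance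
  rw [sphereUniform_eq_map_smul hm hs]
  have hd : finrank ℝ (EuclideanSpace ℝ (Fin m)) = (m - 1) + 1 := by simp; omega
  have hdim : ((m - 1 : ℕ) : ℝ) = (m : ℝ) - 1 := by rw [Nat.cast_pred hm]
  have : IsProbabilityMeasure (sphereUniform m 1) := by
    rw [sphereUniform_of_ne_zero m one_ne_zero, ← hdim]
    exact cond_isProbabilityMeasure_of_finite (hausdorffMeasure_sphere_pos hd).ne'
      (hausdorffMeasure_sphere_lt_top hd).ne
  exact Measure.isProbabilityMeasure_map (measurable_const_smul s).aemeasurable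

section Hfun

variable {m : ℕ} {α r s : ℝ} {μ : Measure (EuclideanSpace ℝ (Fin m))} [IsProbabilityMeasure μ]

lemma Hfun_eq_sub_setIntegral_closedBall (hμ : ∀ᵐ x ∂μ, ‖x‖ = s) (hsr : s ≤ r)
    (z : EuclideanSpace ℝ (Fin m)) :
    Hfun m α r μ z = α - s - ∫ x in closedBall z α, (α - dist z x) ∂μ := by
  have hball : ∀ᵐ x ∂μ, x ∈ closedBall (0 : EuclideanSpace ℝ (Fin m)) r := by
    filter_upwards [hμ] with x hx
    rwa [mem_closedBall_zero_iff, hx]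
  have hnorm : ∫ x, (α - ‖x‖) ∂μ = α - s := by
    rw [integral_congr_ae (hμ.mono fun x hx => by rw [hx])]
    simp
  have hinter : (closedBall z α ∩ closedBall 0 r : Set _) =ᵐ[μ] closedBall z α :=
    inter_ae_eq_left_of_ae_eq_univ (ae_eq_univ.mpr (ae_iff.mp hball))
  rw [Hfun, Measure.restrict_eq_self_of_ae_mem hball, hnorm, Measure.restrict_congr_set hinter]

lemma Hfun_eq_integral_dist_sub (hμ : ∀ᵐ x ∂μ, ‖x‖ = s) (hsr : s ≤ r)
    {z : EuclideanSpace ℝ (Fin m)} (hz : ‖z‖ + s ≤ α) :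
    Hfun m α r μ z = ∫ x, dist z x ∂μ - s := by
  have hdist : ∀ᵐ x ∂μ, dist z x ≤ ‖z‖ + s := by
    filter_upwards [hμ] with x hx
    rw [dist_eq_norm, ← hx]
    exact norm_sub_le z x
  have hball : ∀ᵐ x ∂μ, x ∈ closedBall z α := by
    filter_upwards [hdist] with x hx
    rw [mem_closedBall, dist_comm]
    linarith
  have hint : Integrable (fun x => dist z x) μ :=
    .of_bound (by fun_prop) (‖z‖ + s) (hdist.mono fun x hx => by rwa [norm_of_nonneg dist_nonneg])
  rw [Hfun_eq_sub_setIntegral_closedBall hμ hsr, Measure.restrict_eq_self_of_ae_mem hball,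
    integral_sub (integrable_const α) hint]
  simp only [integral_const, probReal_univ, one_smul]
  ring

end Hfun

lemma Real.le_arccos_iff_le_cos {θ c : ℝ} (hθ₀ : 0 ≤ θ) (hθ : θ ≤ π) (hc₁ : -1 ≤ c) (hc : c ≤ 1) :
    θ ≤ arccos c ↔ c ≤ cos θ := by
  nth_rewrite 2 [← cos_arccos hc₁ hc]
  exact (strictAntiOn_cos.le_iff_ge ⟨arccos_nonneg c, arccos_le_pi c⟩ ⟨hθ₀, hθ⟩).symm

section Angle

open InnerProductGeometry

variable {E : Type*} [NormedAddCommGroup E] [InnerProductSpace ℝ E] {v y : E} {s t : ℝ}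

lemma arccos_inner_eq_angle (hv : ‖v‖ = 1) (hy : ‖y‖ = 1) : arccos ⟪v, y⟫ = angle v y := by
  simp [angle, hv, hy]

lemma dist_smul_smul_eq_sqrt (hv : ‖v‖ = 1) (hy : ‖y‖ = 1) (hs : 0 < s) (ht : 0 < t) :
    dist (t • v) (s • y) = √(s ^ 2 + t ^ 2 - 2 * s * t * cos (arccos ⟪v, y⟫)) := by
  have h := norm_sub_sq_eq_norm_sq_add_norm_sq_sub_two_mul_norm_mul_norm_mul_cos_angle
    (t • v) (s • y)
  rw [angle_smul_left_of_pos _ _ ht, angle_smul_right_of_pos _ _ hs, norm_smul, norm_smul, hv, hy,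
    norm_of_nonneg hs.le, norm_of_nonneg ht.le] at h
  rw [arccos_inner_eq_angle hv hy, dist_eq_norm, ← Real.sqrt_sq (norm_nonneg _), sq, h]
  ring_nf

lemma smul_mem_closedBall_smul_iff (hv : ‖v‖ = 1) (hy : ‖y‖ = 1) (hs : 0 < s) (ht : 0 < t) {α : ℝ}
    (hα₁ : |s - t| ≤ α) (hα₂ : α ≤ s + t) :
    s • y ∈ closedBall (t • v) α ↔
      arccos ⟪v, y⟫ ∈ Set.Icc 0 (arccos ((s ^ 2 + t ^ 2 - α ^ 2) / (2 * s * t))) := by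
  have hst : 0 < 2 * s * t := by positivity
  have hα : 0 ≤ α := (abs_nonneg _).trans hα₁
  have hc₁ : -1 ≤ (s ^ 2 + t ^ 2 - α ^ 2) / (2 * s * t) := by
    rw [le_div_iff₀ hst]; nlinarith
  have hc : (s ^ 2 + t ^ 2 - α ^ 2) / (2 * s * t) ≤ 1 := by
    rw [div_le_iff₀ hst]; nlinarith [sq_abs (s - t), abs_nonneg (s - t)]
  rw [Set.mem_Icc, and_iff_right (arccos_nonneg _), Real.le_arccos_iff_le_cos (arccos_nonneg _)
    (arccos_le_pi _) hc₁ hc, div_le_iff₀ hst, mem_closedBall, dist_comm,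
    dist_smul_smul_eq_sqrt hv hy hs ht, Real.sqrt_le_left hα]
  constructor <;> intro h <;> linarith

end Angle

lemma setIntegral_closedBall_sphereUniform_eq {m : ℕ} (hm : 0 < m) {v : EuclideanSpace ℝ (Fin m)}
    (hv : ‖v‖ = 1) {α s t : ℝ} (hs : 0 < s) (ht : 0 < t) (hα₁ : |s - t| ≤ α) (hα₂ : α ≤ s + t) :
    ∫ x in closedBall (t • v) α, (α - dist (t • v) x) ∂sphereUniform m s =
      ∫ θ in Set.Icc 0 (arccos ((s ^ 2 + t ^ 2 - α ^ 2) / (2 * s * t))),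
        (α - √(s ^ 2 + t ^ 2 - 2 * s * t * cos θ))
        ∂(Measure.map (fun x => arccos ⟪v, x⟫) (sphereUniform m 1)) := by
  have hangle : Measurable fun x : EuclideanSpace ℝ (Fin m) => arccos ⟪v, x⟫ := by fun_prop
  rw [sphereUniform_eq_map_smul hm hs,
    setIntegral_map measurableSet_closedBall (by fun_prop) (measurable_const_smul s).aemeasurable,
    setIntegral_map measurableSet_Icc (by fun_prop) hangle.aemeasurable]
  have hsphere := ae_norm_eq_sphereUniform m zero_le_one
  refine (setIntegral_congr_set ?_).trans (setIntegral_congr_ae (hangle measurableSet_Icc) ?_)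
  · filter_upwards [hsphere] with y hy
    exact propext (smul_mem_closedBall_smul_iff hv hy hs ht hα₁ hα₂)
  · filter_upwards [hsphere] with y hy _
    rw [dist_smul_smul_eq_sqrt hv hy hs ht]

theorem stmt7_general (m : ℕ) (r α s t : ℝ) (hα : r < α)
    (hs : s ∈ Set.Icc 0 r) (v : EuclideanSpace ℝ (Fin m)) (hv : ‖v‖ = 1)
    (ht : t ∈ Set.Icc 0 r) :
    (s = 0 → Hfun m α r (sphereUniform m s) (t • v) = t) ∧
    (0 < s → s ≤ α - t →
      Hfun m α r (sphereUniform m s) (t • v) =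
        (∫ x, dist (t • v) x ∂(sphereUniform m s)) - s) ∧
    (α - t ≤ s →
      Real.arccos ((s ^ 2 + t ^ 2 - α ^ 2) / (2 * s * t)) ≤ π ∧
      Hfun m α r (sphereUniform m s) (t • v) =
        α - s - ∫ θ in Set.Icc 0 (Real.arccos ((s ^ 2 + t ^ 2 - α ^ 2) / (2 * s * t))),
          (α - Real.sqrt (s ^ 2 + t ^ 2 - 2 * s * t * Real.cos θ))
          ∂(Measure.map (fun x => Real.arccos ⟪v, x⟫) (sphereUniform m 1))) := by
  obtain ⟨hs₀, hsr⟩ := hs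
  obtain ⟨ht₀, htr⟩ := ht
  have hm : 0 < m := Nat.pos_of_ne_zero fun h => by
    subst h
    simp [Subsingleton.elim v 0] at hv
  have htv : ‖t • v‖ = t := by rw [norm_smul, hv, mul_one, norm_of_nonneg ht₀]
  have := isProbabilityMeasure_sphereUniform hm hs₀
  have hμ := ae_norm_eq_sphereUniform m hs₀
  refine ⟨fun hs => ?_, fun _ hst => Hfun_eq_integral_dist_sub hμ hsr (by linarith),
    fun hst => ⟨arccos_le_pi _, ?_⟩⟩
  · subst hs
    rw [Hfun_eq_integral_dist_sub hμ hsr (by linarith), sphereUniform, if_pos rfl, integral_dirac,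
      dist_zero_right, htv, sub_zero]
  · rw [Hfun_eq_sub_setIntegral_closedBall hμ hsr, setIntegral_closedBall_sphereUniform_eq hm hv
      (by linarith) (by linarith) (abs_sub_le_iff.mpr ⟨by linarith, by linarith⟩) (by linarith)]

/-- The three-case formula for `H^{(α,μ^s,m)}(tv)`, where `μ^s` is the uniform measure on
the sphere of radius `s`, `v` is a unit vector, `t ∈ [0,r]`, `s ∈ [0,r]` and `α > r`:
(1) if `s = 0` it equals `t`; (2) if `0 < s ≤ α − t` it equals `E d(tv,x) − s`;
(3) if `s ≥ α − t` it equals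
`α − s − ∫_0^{θ̄} (α − √(s² + t² − 2st cos θ)) dμ̃(θ)` with
`θ̄ = arccos((s² + t² − α²)/(2st)) ≤ π`, where `μ̃` is the law of the angle between `v`
and a uniformly random point of the unit sphere. -/
theorem stmt7 (m : ℕ) (r α s t : ℝ) (hr : 0 < r) (hα : r < α)
    (hs : s ∈ Set.Icc 0 r) (v : EuclideanSpace ℝ (Fin m)) (hv : ‖v‖ = 1)
    (ht : t ∈ Set.Icc 0 r) :
    (s = 0 → Hfun m α r (sphereUniform m s) (t • v) = t) ∧
    (0 < s → s ≤ α - t →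
      Hfun m α r (sphereUniform m s) (t • v) =
        (∫ x, dist (t • v) x ∂(sphereUniform m s)) - s) ∧
    (α - t ≤ s →
      Real.arccos ((s ^ 2 + t ^ 2 - α ^ 2) / (2 * s * t)) ≤ π ∧
      Hfun m α r (sphereUniform m s) (t • v) =
        α - s - ∫ θ in Set.Icc 0 (Real.arccos ((s ^ 2 + t ^ 2 - α ^ 2) / (2 * s * t))),
          (α - Real.sqrt (s ^ 2 + t ^ 2 - 2 * s * t * Real.cos θ))
          ∂(Measure.map (fun x => Real.arccos ⟪v, x⟫) (sphereUniform m 1))) :=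
  stmt7_general m r α s t hα hs v hv ht
end

section
/- Let m ≥ 2 and r > 0, and fix z ∈ B_r(0) ⊂ ℝ^m. Then the function α ↦ T^{(α,m)}(z) is strictly increasing on the interval (r, r + ‖z‖) and is constant for α ≥ r + ‖z‖, where T^{(α,m)}(z) := ∫_{B_r(0)}(α − ‖x‖) dμ^r(x) − ∫_{B_α(z) ∩ B_r(0)}(α − d(z,x)) dμ^r(x) and μ^r is the uniform probability measure on the sphere of radius r centered at the origin. -/
open MeasureTheory Metric Real
open scoped ENNReal

/-- `T^{(α,m)}(z) = ∫_{B_r(0)}(α − ‖x‖) dμ^r(x) − ∫_{B_α(z) ∩ B_r(0)}(α − d(z,x)) dμ^r(x)`. -/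
noncomputable def Tfun (m : ℕ) (α r : ℝ) (z : EuclideanSpace ℝ (Fin m)) : ℝ :=
  (∫ x in closedBall (0 : EuclideanSpace ℝ (Fin m)) r, (α - ‖x‖) ∂(sphereUniform m r)) -
    ∫ x in closedBall z α ∩ closedBall (0 : EuclideanSpace ℝ (Fin m)) r,
      (α - dist z x) ∂(sphereUniform m r)

open Module Submodule
open scoped NNReal RealInnerProductSpace

variable {k : ℕ}

local notation "E" => EuclideanSpace ℝ (Fin (k+1))
local notation "E'" => EuclideanSpace ℝ (Fin k)

lemma unit_ne_zero {v : EuclideanSpace ℝ (Fin (k+1))} (hv : ‖v‖ = 1) : v ≠ 0 := by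
  rw [← norm_pos_iff, hv]; norm_num

noncomputable def sphBasis {v : EuclideanSpace ℝ (Fin (k+1))} (hv : ‖v‖ = 1) :
    OrthonormalBasis (Fin k) ℝ ((ℝ ∙ v)ᗮ) :=
  haveI : Fact (finrank ℝ (EuclideanSpace ℝ (Fin (k+1))) = k + 1) := ⟨finrank_euclideanSpace_fin⟩
  OrthonormalBasis.fromOrthogonalSpanSingleton k (unit_ne_zero hv)

noncomputable def graphMap (r : ℝ) {v : EuclideanSpace ℝ (Fin (k+1))} (hv : ‖v‖ = 1)
    (y : EuclideanSpace ℝ (Fin k)) : EuclideanSpace ℝ (Fin (k+1)) :=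
  (((sphBasis hv).repr.symm y : (ℝ ∙ v)ᗮ) : EuclideanSpace ℝ (Fin (k+1)))
    + Real.sqrt (r ^ 2 - ‖y‖ ^ 2) • v

section graph
variable {r : ℝ} {v : EuclideanSpace ℝ (Fin (k+1))} (hv : ‖v‖ = 1)

lemma norm_orth {w : (ℝ ∙ v)ᗮ} : ‖(w : E)‖ = ‖w‖ := rfl

lemma norm_graphMap_aux (y : E') : ‖((sphBasis hv).repr.symm y : E)‖ = ‖y‖ := by
  rw [norm_orth, LinearIsometryEquiv.norm_map]

/-- key norm computation: `‖w + t • v‖ ^ 2 = ‖w‖ ^ 2 + t ^ 2` for `w ⊥ v`. -/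
lemma norm_add_smul_sq (hv : ‖v‖ = 1) {w : E} (hw : ⟪v, w⟫ = 0) (t : ℝ) :
    ‖w + t • v‖ ^ 2 = ‖w‖ ^ 2 + t ^ 2 := by
  rw [norm_add_sq_real, real_inner_smul_right, real_inner_comm, hw, norm_smul, hv,
    Real.norm_eq_abs]
  ring_nf
  rw [sq_abs]

lemma norm_graphMap (hr : 0 ≤ r) (y : E') (hy : ‖y‖ ≤ r) : ‖graphMap r hv y‖ = r := by
  have hworth : ⟪v, (((sphBasis hv).repr.symm y : (ℝ ∙ v)ᗮ) : E)⟫ = 0 :=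
    Submodule.mem_orthogonal_singleton_iff_inner_right.mp ((sphBasis hv).repr.symm y).2
  have h1 : ‖graphMap r hv y‖ ^ 2 = r ^ 2 := by
    rw [graphMap, norm_add_smul_sq hv hworth, norm_graphMap_aux,
      Real.sq_sqrt (by nlinarith [norm_nonneg y] : (0:ℝ) ≤ r ^ 2 - ‖y‖ ^ 2)]
    ring
  have := congrArg Real.sqrt h1
  rwa [Real.sqrt_sq (norm_nonneg _), Real.sqrt_sq hr] at this

lemma graphMap_sub (y₁ y₂ : E') :
    graphMap r hv y₁ - graphMap r hv y₂
      = (((sphBasis hv).repr.symm (y₁ - y₂) : (ℝ ∙ v)ᗮ) : E)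
        + (Real.sqrt (r ^ 2 - ‖y₁‖ ^ 2) - Real.sqrt (r ^ 2 - ‖y₂‖ ^ 2)) • v := by
  simp only [graphMap, map_sub, Submodule.coe_sub, sub_smul]
  module

lemma graphMap_lipschitzOn {c : ℝ} (hc : 0 < c) (hcr : c ≤ r) :
    LipschitzOnWith (Real.toNNReal (1 + Real.sqrt (r ^ 2 - c ^ 2) / c)) (graphMap r hv)
      (closedBall (0 : E') (Real.sqrt (r ^ 2 - c ^ 2))) := by
  set ρ := Real.sqrt (r ^ 2 - c ^ 2) with hρ
  have hA : (0:ℝ) ≤ r ^ 2 - c ^ 2 := by nlinarith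
  have hρ2 : ρ ^ 2 = r ^ 2 - c ^ 2 := Real.sq_sqrt hA
  have hρ0 : 0 ≤ ρ := Real.sqrt_nonneg _
  apply LipschitzOnWith.of_dist_le_mul
  intro y₁ h₁ y₂ h₂
  rw [mem_closedBall, dist_zero_right] at h₁ h₂
  set t₁ := Real.sqrt (r ^ 2 - ‖y₁‖ ^ 2) with ht₁
  set t₂ := Real.sqrt (r ^ 2 - ‖y₂‖ ^ 2) with ht₂
  have hb : ∀ y : E', ‖y‖ ≤ ρ → c ≤ Real.sqrt (r ^ 2 - ‖y‖ ^ 2) ∧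
      Real.sqrt (r ^ 2 - ‖y‖ ^ 2) ^ 2 = r ^ 2 - ‖y‖ ^ 2 := by
    intro y hy
    have h2 : ‖y‖ ^ 2 ≤ ρ ^ 2 := by nlinarith [norm_nonneg y]
    constructor
    · rw [show c = Real.sqrt (c ^ 2) by rw [Real.sqrt_sq hc.le]]
      exact Real.sqrt_le_sqrt (by nlinarith)
    · exact Real.sq_sqrt (by nlinarith)
  obtain ⟨h1c, h1s⟩ := hb y₁ h₁
  obtain ⟨h2c, h2s⟩ := hb y₂ h₂
  have ht1 : 0 ≤ t₁ := Real.sqrt_nonneg _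
  have ht2 : 0 ≤ t₂ := Real.sqrt_nonneg _
  have hdist : dist (graphMap r hv y₁) (graphMap r hv y₂) ≤ dist y₁ y₂ + |t₁ - t₂| := by
    rw [dist_eq_norm, graphMap_sub]
    refine (norm_add_le _ _).trans ?_
    rw [norm_graphMap_aux, norm_smul, hv, Real.norm_eq_abs, mul_one, dist_eq_norm]
  have hkey : |t₁ - t₂| * (2 * c) ≤ dist y₁ y₂ * (2 * ρ) := by
    have e1 : |t₁ - t₂| * (t₁ + t₂) = |‖y₂‖ ^ 2 - ‖y₁‖ ^ 2| := by
      rw [← abs_of_nonneg (by positivity : (0:ℝ) ≤ t₁ + t₂), ← abs_mul]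
      congr 1
      nlinarith
    have e2 : |‖y₂‖ ^ 2 - ‖y₁‖ ^ 2| ≤ dist y₁ y₂ * (2 * ρ) := by
      have : |‖y₂‖ ^ 2 - ‖y₁‖ ^ 2| = |‖y₂‖ - ‖y₁‖| * (‖y₂‖ + ‖y₁‖) := by
        rw [← abs_of_nonneg (by positivity : (0:ℝ) ≤ ‖y₂‖ + ‖y₁‖), ← abs_mul]
        congr 1; ring
      rw [this]
      have h3 : |‖y₂‖ - ‖y₁‖| ≤ dist y₁ y₂ := by
        rw [dist_eq_norm, ← norm_neg (y₁ - y₂), neg_sub]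
        exact abs_norm_sub_norm_le _ _
      have h4 : ‖y₂‖ + ‖y₁‖ ≤ 2 * ρ := by linarith
      exact mul_le_mul h3 h4 (by positivity) dist_nonneg
    calc |t₁ - t₂| * (2 * c) ≤ |t₁ - t₂| * (t₁ + t₂) := by
          apply mul_le_mul_of_nonneg_left (by linarith) (abs_nonneg _)
      _ = |‖y₂‖ ^ 2 - ‖y₁‖ ^ 2| := e1
      _ ≤ dist y₁ y₂ * (2 * ρ) := e2
  have habs : |t₁ - t₂| ≤ (ρ / c) * dist y₁ y₂ := by
    rw [div_mul_eq_mul_div, le_div_iff₀ hc]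
    nlinarith
  have hcoe : (Real.toNNReal (1 + ρ / c) : ℝ) = 1 + ρ / c :=
    Real.coe_toNNReal _ (by positivity)
  rw [hcoe]
  calc dist (graphMap r hv y₁) (graphMap r hv y₂) ≤ dist y₁ y₂ + |t₁ - t₂| := hdist
    _ ≤ dist y₁ y₂ + (ρ / c) * dist y₁ y₂ := by linarith
    _ = (1 + ρ / c) * dist y₁ y₂ := by ring

/-- Every sphere point with `⟪v,x⟫ ≥ c` is in the image of the graph map over the closed ball
of radius `√(r²-c²)`. -/
lemma mem_graphMap_image {c : ℝ} (hc : 0 < c) {x : E} (hx : ‖x‖ = r) (hvx : c ≤ ⟪v, x⟫) :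
    x ∈ graphMap r hv '' closedBall (0 : E') (Real.sqrt (r ^ 2 - c ^ 2)) := by
  set t : ℝ := ⟪v, x⟫ with htdef
  have ht0 : 0 < t := lt_of_lt_of_le hc hvx
  have hw : x - t • v ∈ (ℝ ∙ v)ᗮ := by
    rw [Submodule.mem_orthogonal_singleton_iff_inner_right, inner_sub_right,
      real_inner_smul_right, real_inner_self_eq_norm_sq, hv]
    ring
  set y : E' := (sphBasis hv).repr ⟨x - t • v, hw⟩ with hydef
  have hny : ‖y‖ ^ 2 = r ^ 2 - t ^ 2 := by
    have h1 : ‖y‖ = ‖x - t • v‖ := by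
      rw [hydef, LinearIsometryEquiv.norm_map]; rfl
    rw [h1, norm_sub_sq_real, real_inner_smul_right, real_inner_comm, ← htdef, norm_smul, hv,
      Real.norm_eq_abs, hx]
    ring_nf
    rw [sq_abs]
    ring
  have hty : Real.sqrt (r ^ 2 - ‖y‖ ^ 2) = t := by
    rw [hny, show r ^ 2 - (r ^ 2 - t ^ 2) = t ^ 2 by ring, Real.sqrt_sq ht0.le]
  refine ⟨y, ?_, ?_⟩
  · rw [mem_closedBall, dist_zero_right, show ‖y‖ = Real.sqrt (‖y‖ ^ 2) from
      (Real.sqrt_sq (norm_nonneg _)).symm]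
    apply Real.sqrt_le_sqrt
    rw [hny]
    nlinarith
  · rw [graphMap, hty, hydef, LinearIsometryEquiv.symm_apply_apply]
    simp

/-- The projection map back to the chart. -/
noncomputable def projMap {v : EuclideanSpace ℝ (Fin (k+1))} (hv : ‖v‖ = 1)
    (x : EuclideanSpace ℝ (Fin (k+1))) : EuclideanSpace ℝ (Fin k) :=
  (sphBasis hv).repr (orthogonalProjection ((ℝ ∙ v)ᗮ) x)

lemma projMap_lipschitz : LipschitzWith 1 (projMap hv) := by
  apply LipschitzWith.of_dist_le_mul
  intro x₁ x₂
  rw [NNReal.coe_one, one_mul, dist_eq_norm, dist_eq_norm, projMap, projMap,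
    ← LinearIsometryEquiv.map_sub, LinearIsometryEquiv.norm_map, ← map_sub]
  have h1 := ContinuousLinearMap.le_opNorm (orthogonalProjection ((ℝ ∙ v)ᗮ)) (x₁ - x₂)
  have h2 := orthogonalProjection_norm_le ((ℝ ∙ v)ᗮ : Submodule ℝ (EuclideanSpace ℝ (Fin (k+1))))
  nlinarith [norm_nonneg (x₁ - x₂)]

lemma projMap_graphMap (y : E') : projMap hv (graphMap r hv y) = y := by
  rw [projMap, graphMap, map_add, _root_.map_smul,
    orthogonalProjection_mem_subspace_eq_self,
    Submodule.orthogonalProjectionOnto_apply_of_mem_orthogonal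
      (Submodule.le_orthogonal_orthogonal _ (Submodule.mem_span_singleton_self v)),
    smul_zero, add_zero, LinearIsometryEquiv.apply_symm_apply]

lemma continuous_graphMap : Continuous (graphMap r hv) := by
  apply Continuous.add
  · exact continuous_subtype_val.comp ((sphBasis hv).repr.symm.continuous)
  · exact (Real.continuous_sqrt.comp (continuous_const.sub (continuous_norm.pow 2))).smul
      continuous_const

end graph

lemma haar_aux (k : ℕ) :
    (μH[(k:ℝ)] : Measure (EuclideanSpace ℝ (Fin k))).IsAddHaarMeasure := by
  have := @isAddHaarMeasure_hausdorffMeasure (EuclideanSpace ℝ (Fin k)) _ _ _ _ _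
  rwa [finrank_euclideanSpace_fin] at this

lemma sphere_cap_pos {k : ℕ} {r : ℝ} (hr : 0 < r) {V : Set (EuclideanSpace ℝ (Fin (k+1)))}
    (hV : IsOpen V) {p : EuclideanSpace ℝ (Fin (k+1))} (hp : ‖p‖ = r) (hpV : p ∈ V) :
    0 < μH[(k:ℝ)] (sphere (0 : EuclideanSpace ℝ (Fin (k+1))) r ∩ V) := by
  haveI := haar_aux k
  set v : EuclideanSpace ℝ (Fin (k+1)) := r⁻¹ • p with hvdef
  have hv : ‖v‖ = 1 := by
    rw [hvdef, norm_smul, norm_inv, Real.norm_eq_abs, abs_of_pos hr, hp, inv_mul_cancel₀ hr.ne']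
  have hΦ0 : graphMap r hv 0 = p := by
    rw [graphMap]
    simp only [map_zero, Submodule.coe_zero, norm_zero, zero_add]
    rw [show (0:ℝ)^2 = 0 by ring, sub_zero, Real.sqrt_sq hr.le, hvdef, smul_smul,
      mul_inv_cancel₀ hr.ne', one_smul]
  have hmem : graphMap r hv ⁻¹' V ∈ nhds (0 : EuclideanSpace ℝ (Fin k)) :=
    (continuous_graphMap hv).continuousAt.preimage_mem_nhds (hΦ0 ▸ hV.mem_nhds hpV)
  obtain ⟨η, hη0, hηsub⟩ := Metric.mem_nhds_iff.mp hmem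
  have hη'0 : 0 < min η r := lt_min hη0 hr
  have hsub : ball (0 : EuclideanSpace ℝ (Fin k)) (min η r)
      ⊆ projMap hv '' (sphere (0 : EuclideanSpace ℝ (Fin (k+1))) r ∩ V) := by
    intro y hy
    rw [mem_ball, dist_zero_right] at hy
    refine ⟨graphMap r hv y, ⟨?_, ?_⟩, projMap_graphMap hv y⟩
    · rw [mem_sphere, dist_zero_right]
      exact norm_graphMap hv hr.le y (le_of_lt (lt_of_lt_of_le hy (min_le_right _ _)))
    · exact hηsub (by rw [mem_ball, dist_zero_right]; exact lt_of_lt_of_le hy (min_le_left _ _))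
  calc (0:ℝ≥0∞) < μH[(k:ℝ)] (ball (0 : EuclideanSpace ℝ (Fin k)) (min η r)) :=
        measure_ball_pos _ _ hη'0
    _ ≤ μH[(k:ℝ)] (projMap hv '' (sphere (0 : EuclideanSpace ℝ (Fin (k+1))) r ∩ V)) :=
        measure_mono hsub
    _ ≤ ((1:ℝ≥0) : ℝ≥0∞) ^ (k:ℝ) * μH[(k:ℝ)] (sphere (0 : EuclideanSpace ℝ (Fin (k+1))) r ∩ V) :=
        (projMap_lipschitz hv).hausdorffMeasure_image_le (Nat.cast_nonneg k) _
    _ = μH[(k:ℝ)] (sphere (0 : EuclideanSpace ℝ (Fin (k+1))) r ∩ V) := by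
        simp

lemma norm_sq_eq_sum {k : ℕ} (x : EuclideanSpace ℝ (Fin k)) : ‖x‖ ^ 2 = ∑ i, x i ^ 2 := by
  rw [EuclideanSpace.norm_eq, Real.sq_sqrt (by positivity)]
  exact Finset.sum_congr rfl fun i _ => by rw [Real.norm_eq_abs, sq_abs]

lemma sphere_hausdorff_lt_top {k : ℕ} {r : ℝ} (hr : 0 < r) :
    μH[(k:ℝ)] (sphere (0 : EuclideanSpace ℝ (Fin (k+1))) r) < ∞ := by
  haveI := haar_aux k
  set c : ℝ := r / (k+1) with hcdef
  have hk1 : (0:ℝ) < k + 1 := by positivity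
  have hc : 0 < c := by positivity
  have hcr : c ≤ r := by
    rw [hcdef, div_le_iff₀ hk1]
    nlinarith [Nat.cast_nonneg (α := ℝ) k]
  set ρ : ℝ := Real.sqrt (r ^ 2 - c ^ 2) with hρdef
  set v : Fin (k+1) → Bool → EuclideanSpace ℝ (Fin (k+1)) := fun i b =>
    (if b then (1:ℝ) else -1) • EuclideanSpace.single i (1:ℝ) with hvdef
  have hv : ∀ i b, ‖v i b‖ = 1 := by
    intro i b
    rw [hvdef]
    cases b <;> simp [norm_smul, EuclideanSpace.norm_single]
  have hinner : ∀ (i : Fin (k+1)) (b : Bool) (x : EuclideanSpace ℝ (Fin (k+1))),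
      ⟪v i b, x⟫ = (if b then (1:ℝ) else -1) * x i := by
    intro i b x
    rw [hvdef]
    simp only [real_inner_smul_left]
    rw [EuclideanSpace.inner_single_left]
    simp
  have hcover : sphere (0 : EuclideanSpace ℝ (Fin (k+1))) r ⊆
      ⋃ i, ⋃ b, graphMap r (hv i b) '' closedBall (0 : EuclideanSpace ℝ (Fin k)) ρ := by
    intro x hx
    have hxr : ‖x‖ = r := by rwa [mem_sphere, dist_zero_right] at hx
    have hex : ∃ i, c ≤ |x i| := by
      by_contra hcon
      push_neg at hcon
      have hlt : ∑ i, x i ^ 2 < ∑ _i : Fin (k+1), c ^ 2 := by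
        apply Finset.sum_lt_sum_of_nonempty (Finset.univ_nonempty)
        intro i _
        have := hcon i
        nlinarith [abs_nonneg (x i), sq_abs (x i)]
      rw [Finset.sum_const, Finset.card_univ, Fintype.card_fin, nsmul_eq_mul] at hlt
      rw [← norm_sq_eq_sum, hxr, hcdef] at hlt
      push_cast at hlt
      have h2 : ((k:ℝ)+1) * ((r/((k:ℝ)+1))^2) = r^2/((k:ℝ)+1) := by
        field_simp
      rw [h2] at hlt
      have h3 : r^2/((k:ℝ)+1) ≤ r^2 := by
        apply div_le_self (sq_nonneg r)
        linarith [Nat.cast_nonneg (α := ℝ) k]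
      linarith
    obtain ⟨i, hi⟩ := hex
    set b : Bool := decide (0 ≤ x i) with hbdef
    have hvx : c ≤ ⟪v i b, x⟫ := by
      rw [hinner]
      rcases le_or_gt 0 (x i) with h | h
      · simpa [hbdef, h, abs_of_nonneg h] using hi
      · simpa [hbdef, not_le.mpr h, abs_of_neg h] using hi
    exact Set.mem_iUnion.mpr ⟨i, Set.mem_iUnion.mpr ⟨b, mem_graphMap_image (hv i b) hc hxr hvx⟩⟩
  refine lt_of_le_of_lt (measure_mono hcover) ?_
  refine lt_of_le_of_lt (measure_iUnion_le _) ?_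
  rw [tsum_fintype]
  refine ENNReal.sum_lt_top.mpr fun i _ => ?_
  refine lt_of_le_of_lt (measure_iUnion_le _) ?_
  rw [tsum_fintype]
  refine ENNReal.sum_lt_top.mpr fun b _ => ?_
  refine lt_of_le_of_lt
    ((graphMap_lipschitzOn (hv i b) hc hcr).hausdorffMeasure_image_le (Nat.cast_nonneg k)) ?_
  apply ENNReal.mul_lt_top
  · exact ENNReal.rpow_lt_top_of_nonneg (Nat.cast_nonneg k) ENNReal.coe_ne_top
  · exact (isCompact_closedBall _ _).measure_lt_top

section measurePart
variable {k : ℕ} {r : ℝ}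

local notation "E₁" => EuclideanSpace ℝ (Fin (k+1))

lemma sphereUniform_eq (hr : r ≠ 0) :
    sphereUniform (k+1) r = (μH[(k:ℝ)] (sphere (0:E₁) r))⁻¹ •
      (μH[(k:ℝ)]).restrict (sphere (0:E₁) r) := by
  rw [sphereUniform, if_neg hr]
  have h : ((k+1:ℕ):ℝ) - 1 = (k:ℝ) := by push_cast; ring
  rw [h]

lemma sphere_hausdorff_pos (hr : 0 < r) : 0 < μH[(k:ℝ)] (sphere (0:E₁) r) := by
  have hp : ‖(r • EuclideanSpace.single (0 : Fin (k+1)) (1:ℝ) : E₁)‖ = r := by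
    simp [norm_smul, EuclideanSpace.norm_single, abs_of_pos hr]
  have := sphere_cap_pos hr isOpen_univ hp (Set.mem_univ _)
  rwa [Set.inter_univ] at this

lemma isProb_sphereUniform (hr : 0 < r) : IsProbabilityMeasure (sphereUniform (k+1) r) := by
  constructor
  rw [sphereUniform_eq hr.ne', Measure.smul_apply, Measure.restrict_apply_univ, smul_eq_mul]
  exact ENNReal.inv_mul_cancel (sphere_hausdorff_pos hr).ne' (sphere_hausdorff_lt_top hr).ne

lemma ae_mem_sphere (hr : 0 < r) :
    ∀ᵐ x ∂(sphereUniform (k+1) r), x ∈ sphere (0:E₁) r := by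
  rw [MeasureTheory.ae_iff]
  have hmeas : MeasurableSet (sphere (0:E₁) r) := (isClosed_sphere).measurableSet
  rw [sphereUniform_eq hr.ne']
  have h0 : {a : E₁ | ¬ a ∈ sphere (0:E₁) r} = (sphere (0:E₁) r)ᶜ := rfl
  rw [h0, Measure.smul_apply, Measure.restrict_apply hmeas.compl, Set.compl_inter_self]
  simp

lemma integrable_aux {μ : Measure E₁} [IsFiniteMeasure μ] {f : E₁ → ℝ} (hf : Continuous f)
    {C : ℝ} (h : ∀ᵐ x ∂μ, |f x| ≤ C) : Integrable f μ :=
  (integrable_const C).mono' hf.aestronglyMeasurable (by simpa using h)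

lemma indicator_closedBall_eq (z : E₁) (α : ℝ) :
    (closedBall z α).indicator (fun x => α - dist z x) = fun x => max (α - dist z x) 0 := by
  funext x
  by_cases hx : x ∈ closedBall z α
  · have h1 : dist z x ≤ α := by rw [mem_closedBall, dist_comm] at hx; exact hx
    rw [Set.indicator_of_mem hx, max_eq_left (by linarith : (0:ℝ) ≤ α - dist z x)]
  · have h1 : α < dist z x := by
      rw [mem_closedBall, not_le, dist_comm] at hx
      exact hx
    rw [Set.indicator_of_notMem hx, max_eq_right (by linarith : α - dist z x ≤ (0:ℝ))]

lemma Tfun_eq (hr : 0 < r) (z : E₁) (α : ℝ) :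
    Tfun (k+1) α r z
      = ∫ x, ((α - r) - max (α - dist z x) 0) ∂(sphereUniform (k+1) r) := by
  haveI := isProb_sphereUniform (k := k) hr
  set μ := sphereUniform (k+1) r with hμ
  have hae := ae_mem_sphere (k := k) hr
  have hrestr : μ.restrict (closedBall (0:E₁) r) = μ :=
    Measure.restrict_eq_self_of_ae_mem
      (hae.mono fun x hx => by
        rw [mem_sphere, dist_zero_right] at hx
        rw [mem_closedBall, dist_zero_right, hx])
  have hint1 : Integrable (fun x : E₁ => α - ‖x‖) μ :=
    integrable_aux (C := |α - r|) (by continuity)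
      (hae.mono fun x hx => by
        rw [mem_sphere, dist_zero_right] at hx
        rw [hx])
  have hint2 : Integrable (fun x : E₁ => max (α - dist z x) 0) μ :=
    integrable_aux (C := |α|)
      ((continuous_const.sub (Continuous.dist continuous_const continuous_id)).max
        continuous_const)
      (Filter.Eventually.of_forall fun x => by
        rw [abs_of_nonneg (le_max_right _ _)]
        rcases le_total (α - dist z x) 0 with h | h
        · rw [max_eq_right h]; exact abs_nonneg α
        · rw [max_eq_left h]
          exact le_trans (sub_le_self α dist_nonneg) (le_abs_self α))
  simp only [Tfun]
  rw [← Measure.restrict_restrict measurableSet_closedBall, hrestr,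
    ← integral_indicator measurableSet_closedBall, indicator_closedBall_eq,
    ← integral_sub hint1 hint2]
  exact integral_congr_ae (hae.mono fun x hx => by
    rw [mem_sphere, dist_zero_right] at hx
    dsimp only
    rw [hx])

end measurePart

lemma max_sub_max_le {a b t : ℝ} (hab : a ≤ b) : max (b - t) 0 - max (a - t) 0 ≤ b - a := by
  rcases le_total (b - t) 0 with h | h
  · rw [max_eq_right h, max_eq_right (by linarith : a - t ≤ (0:ℝ))]; linarith
  · rw [max_eq_left h]
    rcases le_total (a - t) 0 with h' | h'
    · rw [max_eq_right h']; linarith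
    · rw [max_eq_left h']; linarith

lemma max_sub_max_lt {a b t : ℝ} (hab : a < b) (hat : a < t) :
    0 < (b - a) - (max (b - t) 0 - max (a - t) 0) := by
  have h1 : max (a - t) 0 = 0 := max_eq_right (by linarith)
  rcases le_total b t with h | h
  · rw [h1, max_eq_right (by linarith : b - t ≤ (0:ℝ))]; linarith
  · rw [h1, max_eq_left (by linarith : (0:ℝ) ≤ b - t)]; linarith

/-- For `m ≥ 2`, `r > 0` and `z ∈ B_r(0)`, the map `α ↦ T^{(α,m)}(z)` is strictly
increasing on `(r, r + ‖z‖)` and constant for `α ≥ r + ‖z‖`. -/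
theorem stmt9 (m : ℕ) (hm : 2 ≤ m) (r : ℝ) (hr : 0 < r)
    (z : EuclideanSpace ℝ (Fin m)) (hz : z ∈ closedBall (0 : EuclideanSpace ℝ (Fin m)) r) :
    StrictMonoOn (fun α => Tfun m α r z) (Set.Ioo r (r + ‖z‖)) ∧
    ∀ α₁ α₂ : ℝ, r + ‖z‖ ≤ α₁ → r + ‖z‖ ≤ α₂ → Tfun m α₁ r z = Tfun m α₂ r z := by
  obtain ⟨k, rfl⟩ : ∃ k, m = k + 1 := ⟨m - 1, by omega⟩
  haveI := isProb_sphereUniform (k := k) hr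
  have hae := ae_mem_sphere (k := k) hr
  set μ := sphereUniform (k+1) r with hμ
  have hint : ∀ α : ℝ,
      Integrable (fun x : EuclideanSpace ℝ (Fin (k+1)) =>
        (α - r) - max (α - dist z x) 0) μ := by
    intro α
    apply integrable_aux (C := |α - r| + |α|)
    · exact continuous_const.sub
        ((continuous_const.sub (Continuous.dist continuous_const continuous_id)).max
          continuous_const)
    · refine Filter.Eventually.of_forall fun x => ?_
      have h1 : |max (α - dist z x) 0| ≤ |α| := by
        rw [abs_of_nonneg (le_max_right _ _)]
        rcases le_total (α - dist z x) 0 with h | h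
        · rw [max_eq_right h]; exact abs_nonneg α
        · rw [max_eq_left h]
          exact le_trans (sub_le_self α dist_nonneg) (le_abs_self α)
      have h2 : |(α - r) - max (α - dist z x) 0| ≤ |α - r| + |max (α - dist z x) 0| := by
        rw [sub_eq_add_neg]
        exact (abs_add_le _ _).trans_eq (by rw [abs_neg])
      linarith
  constructor
  · intro a ha b hb hab
    have hza : 0 < ‖z‖ := by
      have h1 := ha.1
      have h2 := ha.2
      simp only [Set.mem_Ioo] at ha
      linarith [ha.1, ha.2]
    simp only [Tfun_eq hr z]
    rw [← sub_pos, ← integral_sub (hint b) (hint a)]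
    have hGnn : ∀ x : EuclideanSpace ℝ (Fin (k+1)),
        0 ≤ ((b - r) - max (b - dist z x) 0) - ((a - r) - max (a - dist z x) 0) := by
      intro x
      have := max_sub_max_le (t := dist z x) hab.le
      linarith
    refine (integral_pos_iff_support_of_nonneg hGnn ((hint b).sub (hint a))).mpr ?_
    set U : Set (EuclideanSpace ℝ (Fin (k+1))) := {x | a < dist z x} with hUdef
    have hUopen : IsOpen U :=
      isOpen_lt continuous_const (Continuous.dist continuous_const continuous_id)
    have hUsub : U ⊆ Function.support
        (fun x => ((b - r) - max (b - dist z x) 0) - ((a - r) - max (a - dist z x) 0)) := by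
      intro x hx
      have h1 := max_sub_max_lt hab (hx : a < dist z x)
      have : 0 < ((b - r) - max (b - dist z x) 0) - ((a - r) - max (a - dist z x) 0) := by
        linarith
      exact ne_of_gt this
    refine lt_of_lt_of_le ?_ (measure_mono hUsub)
    rw [hμ, sphereUniform_eq hr.ne', Measure.smul_apply,
      Measure.restrict_apply hUopen.measurableSet, smul_eq_mul]
    have hpU : ((-(r * ‖z‖⁻¹)) • z) ∈ U ∩ sphere (0 : EuclideanSpace ℝ (Fin (k+1))) r := by
      constructor
      · have hzp : z - (-(r * ‖z‖⁻¹)) • z = (1 + r * ‖z‖⁻¹) • z := by module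
        have : dist z ((-(r * ‖z‖⁻¹)) • z) = ‖z‖ + r := by
          rw [dist_eq_norm, hzp, norm_smul, Real.norm_eq_abs,
            abs_of_pos (by positivity : (0:ℝ) < 1 + r * ‖z‖⁻¹)]
          field_simp
        rw [hUdef, Set.mem_setOf_eq, this]
        linarith [ha.2]
      · rw [mem_sphere, dist_zero_right, norm_smul, Real.norm_eq_abs, abs_neg,
          abs_of_pos (by positivity : (0:ℝ) < r * ‖z‖⁻¹)]
        field_simp
    have hcap := sphere_cap_pos hr hUopen
      (p := (-(r * ‖z‖⁻¹)) • z) ?_ hpU.1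
    · rw [Set.inter_comm] at hcap
      exact ENNReal.mul_pos (ENNReal.inv_ne_zero.mpr (sphere_hausdorff_lt_top hr).ne) hcap.ne'
    · rw [← dist_zero_right, ← mem_sphere]
      exact hpU.2
  · intro α₁ α₂ h₁ h₂
    rw [Tfun_eq hr z, Tfun_eq hr z]
    apply integral_congr_ae
    filter_upwards [hae] with x hx
    rw [mem_sphere, dist_zero_right] at hx
    have hd : dist z x ≤ r + ‖z‖ := by
      calc dist z x ≤ dist z 0 + dist 0 x := dist_triangle _ _ _
        _ = ‖z‖ + ‖x‖ := by rw [dist_zero_right, dist_zero_left]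
        _ = r + ‖z‖ := by rw [hx]; ring
    rw [max_eq_left (by linarith : (0:ℝ) ≤ α₁ - dist z x),
      max_eq_left (by linarith : (0:ℝ) ≤ α₂ - dist z x)]
    ring
end

section
/- Let m ≥ 2, let μ be a probability measure on B_r(0) ⊂ ℝ^m that is invariant under rotations about the origin and assigns zero measure to every Lebesgue-null set, and let α > r. Let z ∈ ℝ^m with ‖z‖ ∈ (α, α + r). Then R^{(α,μ,m)}(z) := ∫_{B_α(z) ∩ B_r(0)}(α − d(z,x)) dμ(x) ≤ (α + r − ‖z‖) · (√π/2) · √(m/2) · (α/‖z‖)^{m-2}. -/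
/-!
On `closedBall z α ∩ closedBall 0 r` the integrand is at most `α + r - ‖z‖`, and
`closedBall z α` lies in the cone of half-angle `arcsin s`, `s = α / ‖z‖`, around `z`.
Any two rotation-invariant measures without an atom at the origin give such a cone the same
proportion of their total mass, so `μ` of the cone equals the proportion of the unit ball `B`
that the cone occupies. Inside `B` the cone lies in a cylinder of radius `s` and height `1`,
whence `μ(cone) ≤ s ^ (m - 1) vol(B_{m-1}) / vol(B_m)`, and a Gautschi-type bound on `Γ` turns
this ratio into `(√π / 2) √(m / 2) s ^ (m - 2)`.
-/

open MeasureTheory Metric Real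
open scoped RealInnerProductSpace

section InnerCone

variable {E : Type*} [NormedAddCommGroup E] [InnerProductSpace ℝ E]

/-- The closed cone of vectors making an angle at most `arccos c` with `v`. -/
def innerCone (v : E) (c : ℝ) : Set E := {x | c * (‖x‖ * ‖v‖) ≤ ⟪x, v⟫}

theorem mem_innerCone_comm {v x : E} {c : ℝ} : x ∈ innerCone v c ↔ v ∈ innerCone x c := by
  simp only [innerCone, Set.mem_ofPred_eq, real_inner_comm x v, mul_comm ‖x‖]

theorem innerCone_smul (v : E) (c : ℝ) {l : ℝ} (hl : 0 < l) :
    innerCone (l • v) c = innerCone v c := by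
  ext x
  simp only [innerCone, Set.mem_ofPred_eq, norm_smul, real_inner_smul_right, Real.norm_eq_abs,
    abs_of_pos hl]
  rw [show c * (‖x‖ * (l * ‖v‖)) = l * (c * (‖x‖ * ‖v‖)) by ring]
  exact mul_le_mul_iff_right₀ hl

theorem LinearIsometryEquiv.preimage_innerCone (R : E ≃ₗᵢ[ℝ] E) (v : E) (c : ℝ) :
    R ⁻¹' innerCone v c = innerCone (R.symm v) c := by
  ext x
  have : ⟪R x, v⟫ = ⟪x, R.symm v⟫ := by
    rw [← R.symm.inner_map_map, R.symm_apply_apply]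
  simp only [innerCone, Set.mem_preimage, Set.mem_ofPred_eq, R.norm_map, R.symm.norm_map, this]

theorem isClosed_innerCone (v : E) (c : ℝ) : IsClosed (innerCone v c) :=
  isClosed_le (by fun_prop) (continuous_id.inner continuous_const)

theorem closedBall_subset_innerCone {z : E} {α : ℝ} (hα : 0 < α) (hz : α < ‖z‖) :
    closedBall z α ⊆ innerCone z √(1 - (α / ‖z‖) ^ 2) := by
  intro x hx
  set c := √(1 - (α / ‖z‖) ^ 2)
  have hz0 : 0 < ‖z‖ := hα.trans hz
  have hc : c ^ 2 * ‖z‖ ^ 2 = ‖z‖ ^ 2 - α ^ 2 := by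
    rw [Real.sq_sqrt, sub_mul, div_pow, div_mul_cancel₀ _ (by positivity), one_mul]
    rw [sub_nonneg, div_pow, div_le_one (by positivity)]
    nlinarith
  have hxz : ‖x - z‖ ^ 2 ≤ α ^ 2 := by
    gcongr
    rwa [← dist_eq_norm]
  show c * (‖x‖ * ‖z‖) ≤ ⟪x, z⟫
  -- `2 ⟪x, z⟫ ≥ ‖x‖² + ‖z‖² - α² = ‖x‖² + c² ‖z‖² ≥ 2 c ‖x‖ ‖z‖`
  nlinarith [norm_sub_sq_real x z, sq_nonneg (‖x‖ - c * ‖z‖)]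

theorem exists_linearIsometryEquiv_apply_eq {u v : E} (h : ‖u‖ = ‖v‖) :
    ∃ R : E ≃ₗᵢ[ℝ] E, R u = v :=
  ⟨_, Submodule.reflection_sub h⟩

theorem measure_innerCone_eq [MeasurableSpace E] [BorelSpace E] {ν : Measure E}
    (hν : ∀ R : E ≃ₗᵢ[ℝ] E, ν.map R = ν) {v w : E} (hv : v ≠ 0) (hw : w ≠ 0) (c : ℝ) :
    ν (innerCone v c) = ν (innerCone w c) := by
  have hu : ‖‖v‖⁻¹ • v‖ = ‖‖w‖⁻¹ • w‖ := by
    simp [norm_smul, hv, hw]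
  obtain ⟨R, hR⟩ := exists_linearIsometryEquiv_apply_eq hu
  rw [← innerCone_smul v c (inv_pos.2 (norm_pos_iff.2 hv)),
    ← innerCone_smul w c (inv_pos.2 (norm_pos_iff.2 hw)), ← hR, ← R.symm_symm,
    ← R.symm.preimage_innerCone, ← Measure.map_apply R.symm.continuous.measurable
      (isClosed_innerCone _ c).measurableSet, hν]

/-- Fubini on `{(x, w) | x ∈ innerCone w c}`, whose sections are cones on both sides. -/
theorem measure_innerCone_mul_measure_univ [MeasurableSpace E] [BorelSpace E]
    [SecondCountableTopology E] {μ ν : Measure E} [SFinite μ] [SFinite ν]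
    (hμ : ∀ R : E ≃ₗᵢ[ℝ] E, μ.map R = μ) (hν : ∀ R : E ≃ₗᵢ[ℝ] E, ν.map R = ν)
    (hμ0 : μ {0} = 0) (hν0 : ν {0} = 0) {z : E} (hz : z ≠ 0) (c : ℝ) :
    μ (innerCone z c) * ν Set.univ = ν (innerCone z c) * μ Set.univ := by
  set T : Set (E × E) := {p | p.1 ∈ innerCone p.2 c}
  have hT : MeasurableSet T :=
    (isClosed_le (by fun_prop : Continuous fun p : E × E => c * (‖p.1‖ * ‖p.2‖))
      continuous_inner).measurableSet
  have hμz : ∀ᵐ x ∂μ, x ≠ 0 := measure_eq_zero_iff_ae_notMem.1 hμ0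
  have hνz : ∀ᵐ w ∂ν, w ≠ 0 := measure_eq_zero_iff_ae_notMem.1 hν0
  calc μ (innerCone z c) * ν Set.univ = ∫⁻ w, μ ((·, w) ⁻¹' T) ∂ν := by
        rw [← lintegral_const]
        refine lintegral_congr_ae (hνz.mono fun w hw => ?_)
        exact measure_innerCone_eq hμ hz hw c
    _ = ∫⁻ x, ν (Prod.mk x ⁻¹' T) ∂μ := by
        rw [← Measure.prod_apply_symm hT, Measure.prod_apply hT]
    _ = ν (innerCone z c) * μ Set.univ := by
        rw [← lintegral_const]
        refine lintegral_congr_ae (hμz.mono fun x hx => ?_)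
        have : Prod.mk x ⁻¹' T = innerCone x c := Set.ext fun w => mem_innerCone_comm
        simp only [this, measure_innerCone_eq hν hx hz c]

/-- For a unit vector `u`, the solid cylinder of radius `s` around the segment `[0, u]`. -/
def innerCylinder (u : E) (s : ℝ) : Set E :=
  {w | ⟪u, w⟫ ∈ Set.Icc 0 1 ∧ ‖w‖ ^ 2 - ⟪u, w⟫ ^ 2 ≤ s ^ 2}

theorem LinearIsometryEquiv.preimage_innerCylinder (R : E ≃ₗᵢ[ℝ] E) (u : E) (s : ℝ) :
    R ⁻¹' innerCylinder u s = innerCylinder (R.symm u) s := by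
  ext x
  have : ⟪u, R x⟫ = ⟪R.symm u, x⟫ := by
    rw [← R.symm.inner_map_map, R.symm_apply_apply]
  simp only [innerCylinder, Set.mem_preimage, Set.mem_ofPred_eq, R.norm_map, this]

theorem isClosed_innerCylinder (u : E) (s : ℝ) : IsClosed (innerCylinder u s) :=
  ((isClosed_Icc.preimage (continuous_const.inner continuous_id)).inter
    (isClosed_le (by fun_prop : Continuous fun w : E => ‖w‖ ^ 2 - ⟪u, w⟫ ^ 2)
      continuous_const))

theorem innerCone_inter_ball_subset_innerCylinder {u : E} (hu : ‖u‖ = 1) {s : ℝ}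
    (hs : 0 ≤ s) (hs1 : s ≤ 1) :
    innerCone u √(1 - s ^ 2) ∩ ball 0 1 ⊆ innerCylinder u s := by
  rintro w ⟨hcone, hball⟩
  set c := √(1 - s ^ 2)
  have hc : c ^ 2 = 1 - s ^ 2 := Real.sq_sqrt (by nlinarith)
  have hw : ‖w‖ < 1 := by rwa [mem_ball_zero_iff] at hball
  have hcw : c * ‖w‖ ≤ ⟪u, w⟫ := by
    simpa [innerCone, hu, real_inner_comm] using hcone
  have hcw0 : 0 ≤ c * ‖w‖ := by positivity
  refine ⟨⟨hcw0.trans hcw, ?_⟩, ?_⟩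
  · exact (real_inner_le_norm u w).trans (by rw [hu, one_mul]; exact hw.le)
  · have hsq : (1 - s ^ 2) * ‖w‖ ^ 2 ≤ ⟪u, w⟫ ^ 2 := by
      rw [← hc, ← mul_pow]
      exact pow_le_pow_left₀ hcw0 hcw 2
    have hw2 : s ^ 2 * ‖w‖ ^ 2 ≤ s ^ 2 := by
      refine mul_le_of_le_one_right (sq_nonneg s) ?_
      exact pow_le_one₀ (norm_nonneg w) hw.le
    linarith

end InnerCone

theorem volume_innerCylinder_single {n : ℕ} {s : ℝ} (hs : 0 ≤ s) :
    volume (innerCylinder (EuclideanSpace.single 0 1 : EuclideanSpace ℝ (Fin (n + 1))) s) =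
      volume (closedBall (0 : EuclideanSpace ℝ (Fin n)) s) := by
  have hball : closedBall (0 : EuclideanSpace ℝ (Fin n)) s =
      {g | ∑ j, g j ^ 2 ≤ s ^ 2} := by
    ext g
    rw [mem_closedBall_zero_iff, ← sq_le_sq₀ (norm_nonneg g) hs, EuclideanSpace.real_norm_sq_eq]
    rfl
  have hcyl : WithLp.toLp 2 ⁻¹' innerCylinder (EuclideanSpace.single 0 1) s =
      MeasurableEquiv.piFinSuccAbove (fun _ => ℝ) 0 ⁻¹'
        (Set.Icc 0 1 ×ˢ (WithLp.toLp 2 ⁻¹' closedBall (0 : EuclideanSpace ℝ (Fin n)) s)) := by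
    ext f
    simp [innerCylinder, hball, EuclideanSpace.real_norm_sq_eq, EuclideanSpace.inner_single_left,
      Fin.sum_univ_succ, Fin.tail]
  rw [← (PiLp.volume_preserving_toLp (Fin (n + 1))).measure_preimage
      (isClosed_innerCylinder _ s).nullMeasurableSet, hcyl,
    (volume_preserving_piFinSuccAbove (fun _ : Fin (n + 1) => ℝ) 0).measure_preimage
      (measurableSet_Icc.prod (measurableSet_closedBall.preimage
        (PiLp.volume_preserving_toLp (Fin n)).measurable)).nullMeasurableSet,
    Measure.volume_eq_prod, Measure.prod_prod, Real.volume_Icc,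
    (PiLp.volume_preserving_toLp (Fin n)).measure_preimage
      measurableSet_closedBall.nullMeasurableSet]
  simp

theorem volume_innerCylinder {n : ℕ} {u : EuclideanSpace ℝ (Fin (n + 1))} (hu : ‖u‖ = 1)
    {s : ℝ} (hs : 0 ≤ s) :
    volume (innerCylinder u s) = volume (closedBall (0 : EuclideanSpace ℝ (Fin n)) s) := by
  have he : ‖u‖ = ‖(EuclideanSpace.single 0 1 : EuclideanSpace ℝ (Fin (n + 1)))‖ := by simp [hu]
  obtain ⟨R, hR⟩ := exists_linearIsometryEquiv_apply_eq he
  have hpre : R ⁻¹' innerCylinder (EuclideanSpace.single 0 1) s = innerCylinder u s := by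
    rw [R.preimage_innerCylinder, ← hR, R.symm_apply_apply]
  rw [← volume_innerCylinder_single hs, ← hpre,
    R.measurePreserving.measure_preimage (isClosed_innerCylinder _ s).nullMeasurableSet]

/-- A Gautschi-type inequality, from the log-convexity of `Γ` on `[x + 1/2, x + 3/2]`. -/
theorem Real.Gamma_add_one_le_sqrt_mul_Gamma_add_half {x : ℝ} (hx : -1 / 2 < x) :
    Gamma (x + 1) ≤ √(x + 1 / 2) * Gamma (x + 1 / 2) := by
  have h₁ : 0 < x + 1 / 2 := by linarith
  have hΓ := Gamma_mul_add_mul_le_rpow_Gamma_mul_rpow_Gamma h₁ (by linarith : 0 < x + 3 / 2)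
    (by norm_num : (0 : ℝ) < 1 / 2) (by norm_num : (0 : ℝ) < 1 / 2) (by norm_num)
  rw [show x + 3 / 2 = x + 1 / 2 + 1 by ring, Gamma_add_one h₁.ne'] at hΓ
  calc Gamma (x + 1) = Gamma (1 / 2 * (x + 1 / 2) + 1 / 2 * (x + 1 / 2 + 1)) := by ring_nf
    _ ≤ _ := hΓ
    _ = √(x + 1 / 2) * Gamma (x + 1 / 2) := by
      have hG := (Gamma_pos_of_pos h₁).le
      rw [← sqrt_eq_rpow, ← sqrt_eq_rpow, sqrt_mul h₁.le, mul_comm, mul_assoc, ← sqrt_mul hG,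
        sqrt_mul_self hG]

theorem Real.Gamma_add_one_le_pi_div_two_mul_sqrt_mul_Gamma_add_half {x : ℝ} (hx : 1 ≤ x) :
    Gamma (x + 1) ≤ π / 2 * √x * Gamma (x + 1 / 2) := by
  refine (Gamma_add_one_le_sqrt_mul_Gamma_add_half (by linarith)).trans ?_
  gcongr
  rw [show π / 2 * √x = √((π / 2) ^ 2 * x) by
    rw [sqrt_mul (by positivity), sqrt_sq (by positivity)]]
  gcongr
  have : 9 / 4 ≤ (π / 2) ^ 2 := by nlinarith [pi_gt_three]
  nlinarith

theorem volume_closedBall_le_mul_volume_ball {n : ℕ} (hn : 1 ≤ n) {s : ℝ} (hs : 0 ≤ s)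
    (hs1 : s ≤ 1) :
    volume (closedBall (0 : EuclideanSpace ℝ (Fin n)) s) ≤
      ENNReal.ofReal (√π / 2 * √((n + 1) / 2) * s ^ (n - 1)) *
        volume (ball (0 : EuclideanSpace ℝ (Fin (n + 1))) 1) := by
  have : Nonempty (Fin n) := ⟨⟨0, hn⟩⟩
  set x : ℝ := (n + 1) / 2 with hx
  have hΓ := Gamma_add_one_le_pi_div_two_mul_sqrt_mul_Gamma_add_half (x := x)
    (by rw [hx, le_div_iff₀ two_pos]; norm_cast; omega)
  have hP : √π * √π = π := mul_self_sqrt pi_pos.le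
  rw [show x + 1 / 2 = n / 2 + 1 by rw [hx]; ring, ← hP] at hΓ
  have hA : 0 < Gamma (n / 2 + 1) := Gamma_pos_of_pos (by positivity)
  have hB : 0 < Gamma (x + 1) := Gamma_pos_of_pos (by positivity)
  rw [EuclideanSpace.volume_closedBall, EuclideanSpace.volume_ball, Fintype.card_fin,
    Fintype.card_fin, ENNReal.ofReal_one, one_pow, one_mul, ← ENNReal.ofReal_pow hs,
    ← ENNReal.ofReal_mul (by positivity), ← ENNReal.ofReal_mul (by positivity)]
  refine ENNReal.ofReal_le_ofReal ?_
  push_cast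
  rw [show ((n : ℝ) + 1) / 2 + 1 = x + 1 by rfl]
  calc s ^ n * (√π ^ n / Gamma (n / 2 + 1)) ≤ s ^ (n - 1) * (√π ^ n / Gamma (n / 2 + 1)) :=
        mul_le_mul_of_nonneg_right (pow_le_pow_of_le_one hs hs1 (Nat.sub_le n 1)) (by positivity)
    _ = s ^ (n - 1) * √π ^ n * Gamma (x + 1) / (Gamma (n / 2 + 1) * Gamma (x + 1)) := by
        field_simp
    _ ≤ s ^ (n - 1) * √π ^ n * (√π * √π / 2 * √x * Gamma (n / 2 + 1)) /
          (Gamma (n / 2 + 1) * Gamma (x + 1)) := by gcongr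
    _ = √π / 2 * √x * s ^ (n - 1) * (√π ^ (n + 1) / Gamma (x + 1)) := by
        field_simp
        ring

theorem measure_innerCone_le {n : ℕ} (hn : 1 ≤ n) {μ : Measure (EuclideanSpace ℝ (Fin (n + 1)))}
    [IsProbabilityMeasure μ]
    (hμ : ∀ R : EuclideanSpace ℝ (Fin (n + 1)) ≃ₗᵢ[ℝ] EuclideanSpace ℝ (Fin (n + 1)),
      μ.map R = μ)
    (hμ0 : μ {0} = 0) {z : EuclideanSpace ℝ (Fin (n + 1))} (hz : z ≠ 0) {s : ℝ} (hs : 0 ≤ s)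
    (hs1 : s ≤ 1) :
    μ (innerCone z √(1 - s ^ 2)) ≤ ENNReal.ofReal (√π / 2 * √((n + 1) / 2) * s ^ (n - 1)) := by
  set B := ball (0 : EuclideanSpace ℝ (Fin (n + 1))) 1
  set u := ‖z‖⁻¹ • z
  have hu : ‖u‖ = 1 := by simp [u, norm_smul, hz]
  have hzu : innerCone z √(1 - s ^ 2) = innerCone u √(1 - s ^ 2) :=
    (innerCone_smul z _ (inv_pos.2 (norm_pos_iff.2 hz))).symm
  have hB : ∀ R : EuclideanSpace ℝ (Fin (n + 1)) ≃ₗᵢ[ℝ] EuclideanSpace ℝ (Fin (n + 1)),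
      (volume.restrict B).map R = volume.restrict B := by
    intro R
    have hRB : R ⁻¹' B = B := by simp [B, R.preimage_ball]
    simpa [hRB] using (R.measurePreserving.restrict_preimage measurableSet_ball (s := B)).map_eq
  have hfubini := measure_innerCone_mul_measure_univ hμ hB hμ0
    (by simp) hz √(1 - s ^ 2)
  rw [Measure.restrict_apply_univ, measure_univ, mul_one,
    Measure.restrict_apply (isClosed_innerCone _ _).measurableSet, hzu] at hfubini
  have hvol : volume (innerCone u √(1 - s ^ 2) ∩ B) ≤
      ENNReal.ofReal (√π / 2 * √((n + 1) / 2) * s ^ (n - 1)) * volume B :=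
    calc volume (innerCone u √(1 - s ^ 2) ∩ B)
        ≤ volume (innerCylinder u s) :=
          measure_mono (innerCone_inter_ball_subset_innerCylinder hu hs hs1)
      _ = volume (closedBall (0 : EuclideanSpace ℝ (Fin n)) s) := volume_innerCylinder hu hs
      _ ≤ _ := volume_closedBall_le_mul_volume_ball hn hs hs1
  rw [← hfubini] at hvol
  rw [hzu]
  exact (ENNReal.mul_le_mul_iff_left (measure_ball_pos _ _ one_pos).ne'
    measure_ball_lt_top.ne).1 hvol

theorem stmt14_general (m : ℕ) (hm : 2 ≤ m) (r α : ℝ) (hr : 0 < r) (hα : r < α)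
    (μ : Measure (EuclideanSpace ℝ (Fin m))) [IsProbabilityMeasure μ]
    (hrot : ∀ R : EuclideanSpace ℝ (Fin m) ≃ₗᵢ[ℝ] EuclideanSpace ℝ (Fin m),
      μ.map R = μ)
    (hac : μ ≪ volume)
    (z : EuclideanSpace ℝ (Fin m)) (hz : ‖z‖ ∈ Set.Ioo α (α + r)) :
    (∫ x in closedBall z α ∩ closedBall (0 : EuclideanSpace ℝ (Fin m)) r,
        (α - dist z x) ∂μ) ≤
      (α + r - ‖z‖) * (Real.sqrt π / 2) * Real.sqrt ((m : ℝ) / 2) *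
        (α / ‖z‖) ^ (m - 2) := by
  obtain ⟨n, rfl⟩ : ∃ n, m = n + 1 := ⟨m - 1, by omega⟩
  set S := closedBall z α ∩ closedBall (0 : EuclideanSpace ℝ (Fin (n + 1))) r
  have hα0 : 0 < α := hr.trans hα
  have hz0 : 0 < ‖z‖ := hα0.trans hz.1
  have hμS : μ.real S ≤ √π / 2 * √((n + 1) / 2) * (α / ‖z‖) ^ (n - 1) := by
    refine ENNReal.toReal_le_of_le_ofReal (by positivity) ?_
    calc μ S ≤ μ (innerCone z √(1 - (α / ‖z‖) ^ 2)) :=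
          measure_mono (Set.inter_subset_left.trans (closedBall_subset_innerCone hα0 hz.1))
      _ ≤ _ := measure_innerCone_le (by omega) hrot (hac (measure_singleton 0))
          (norm_pos_iff.1 hz0) (by positivity) ((div_le_one hz0).2 hz.1.le)
  have hbound : ∀ x ∈ S, ‖α - dist z x‖ ≤ α + r - ‖z‖ := by
    rintro x ⟨hxz, hx0⟩
    rw [mem_closedBall, dist_comm] at hxz
    rw [mem_closedBall_zero_iff] at hx0
    rw [Real.norm_of_nonneg (sub_nonneg.2 hxz)]
    linarith [norm_sub_norm_le z x, dist_eq_norm z x]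
  calc (∫ x in S, (α - dist z x) ∂μ) ≤ (α + r - ‖z‖) * μ.real S :=
        (le_abs_self _).trans (norm_setIntegral_le_of_norm_le_const (measure_lt_top μ S) hbound)
    _ ≤ (α + r - ‖z‖) * (√π / 2 * √((n + 1) / 2) * (α / ‖z‖) ^ (n - 1)) := by
        gcongr
        linarith [hz.2]
    _ = _ := by
        rw [show n + 1 - 2 = n - 1 by omega]
        push_cast
        ring

/-- Let `m ≥ 2` and let `μ` be a probability measure on `B_r(0) ⊂ ℝ^m` invariant under
rotations about the origin and absolutely continuous with respect to Lebesgue measure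
(every Lebesgue-null set has `μ`-measure zero). Let `α > r` and `z ∈ ℝ^m` with
`‖z‖ ∈ (α, α + r)`. Then
`R^{(α,μ,m)}(z) = ∫_{B_α(z) ∩ B_r(0)}(α − d(z,x)) dμ(x)
  ≤ (α + r − ‖z‖)(√π/2)√(m/2)(α/‖z‖)^{m−2}`. -/
theorem stmt14 (m : ℕ) (hm : 2 ≤ m) (r α : ℝ) (hr : 0 < r) (hα : r < α)
    (μ : Measure (EuclideanSpace ℝ (Fin m))) [IsProbabilityMeasure μ]
    (hsupp : μ (closedBall 0 r) = 1)
    (hrot : ∀ R : EuclideanSpace ℝ (Fin m) ≃ₗᵢ[ℝ] EuclideanSpace ℝ (Fin m),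
      μ.map R = μ)
    (hac : μ ≪ volume)
    (z : EuclideanSpace ℝ (Fin m)) (hz : ‖z‖ ∈ Set.Ioo α (α + r)) :
    (∫ x in closedBall z α ∩ closedBall (0 : EuclideanSpace ℝ (Fin m)) r,
        (α - dist z x) ∂μ) ≤
      (α + r - ‖z‖) * (Real.sqrt π / 2) * Real.sqrt ((m : ℝ) / 2) *
        (α / ‖z‖) ^ (m - 2) :=
  stmt14_general m hm r α hr hα μ hrot hac z hz
end

section
/- Let μ be a rotation-invariant probability measure supported on the closed unit ball B₁(0) ⊂ ℝ^m (m ≥ 2) with a density p(x) that is strictly radially decreasing: p(x₁) > p(x₂) whenever ‖x₁‖ < ‖x₂‖. Let c ∈ ℝ^m and z ∈ B₁(c) with z ≠ c, and suppose B₁(z) ∩ B₁(c) has positive measure under the translate μ_c := μ(· − c). Then ∫_{B₁(z) ∩ B₁(c)} (d(z, x) − d(c, x)) dμ_c(x) > 0. -/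
/-!
Reflecting through the midpoint of `z` and `c`, i.e. `x ↦ z + c - x`, preserves Lebesgue
measure and the lens `B₁(z) ∩ B₁(c)` and swaps `d(z, ·)` and `d(c, ·)`. Hence the integral is
half the integral of `(ρ x - ρ (z + c - x)) * (d(z, x) - d(c, x))`, where `ρ` is the density of
`μ_c`. As `ρ` decreases with `d(c, ·)`, this integrand is nonnegative, and it is positive where
`ρ ≠ 0` off the perpendicular bisector of `z` and `c`, a null hyperplane.

Measurability of the density is not assumed: radial monotonicity makes every superlevel set an
open ball up to a null sphere.
-/

open MeasureTheory Metric Set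

section Radial

variable {E : Type*} [NormedAddCommGroup E] [NormedSpace ℝ E] [FiniteDimensional ℝ E]
  [MeasurableSpace E] [BorelSpace E] {μ : Measure E} [μ.IsAddHaarMeasure]

/-- The union `U` of the open balls about `c` through points of `S` lies in `S`, and the points
of `S \ U` all lie at the same distance from `c`, so `S` is an open set up to a null sphere. -/
theorem nullMeasurableSet_of_dist_lt_mem {c : E} {S : Set E}
    (hS : ∀ x ∈ S, ∀ y, dist y c < dist x c → y ∈ S) : NullMeasurableSet S μ := by
  rcases subsingleton_or_nontrivial E with hE | hE
  · exact Subsingleton.measurableSet.nullMeasurableSet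
  set U := ⋃ x ∈ S, ball c (dist x c)
  have hUS : U ⊆ S := iUnion₂_subset fun x hx y hy => hS x hx y (mem_ball.1 hy)
  obtain ⟨r, hr⟩ : ∃ r, S \ U ⊆ sphere c r := by
    rcases (S \ U).eq_empty_or_nonempty with h | ⟨x₀, hx₀⟩
    · exact ⟨0, h ▸ empty_subset _⟩
    refine ⟨dist x₀ c, fun x hx => mem_sphere.2 ?_⟩
    rcases lt_trichotomy (dist x c) (dist x₀ c) with h | h | h
    · exact absurd (mem_biUnion hx₀.1 (mem_ball.2 h)) hx.2
    · exact h
    · exact absurd (mem_biUnion hx.1 (mem_ball.2 h)) hx₀.2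
  rw [← union_sdiff_cancel hUS]
  exact (isOpen_biUnion fun _ _ => isOpen_ball).measurableSet.nullMeasurableSet.union
    (.of_null (measure_mono_null hr (Measure.addHaar_sphere μ c r)))

theorem nullMeasurable_of_dist_lt_le {β : Type*} [LinearOrder β] [TopologicalSpace β]
    [OrderTopology β] [SecondCountableTopology β] [MeasurableSpace β] [BorelSpace β]
    {f : E → β} {c : E} (hf : ∀ x y, dist y c < dist x c → f x ≤ f y) : NullMeasurable f μ :=
  measurable_of_Ioi (δ := NullMeasurableSpace E μ) fun _ =>
    nullMeasurableSet_of_dist_lt_mem (c := c) fun _ hx y hy => lt_of_lt_of_le hx (hf _ y hy)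

end Radial

theorem MeasureTheory.Measure.map_add_right_withDensity {G : Type*} [MeasurableSpace G] [AddGroup G]
    [MeasurableAdd G] (ν : Measure G) [ν.IsAddRightInvariant] (f : G → ENNReal) (c : G) :
    (ν.withDensity f).map (· + c) = ν.withDensity fun x => f (x - c) := by
  ext s hs
  rw [Measure.map_apply (measurable_add_const c) hs,
    withDensity_apply _ (hs.preimage (measurable_add_const c)), withDensity_apply _ hs,
    ← (measurePreserving_add_right ν c).setLIntegral_comp_preimage_emb
      (measurableEmbedding_addRight c) (fun x => f (x - c)) s]
  simp only [add_sub_cancel_right]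

section Reflection

variable {E : Type*} [NormedAddCommGroup E]

theorem dist_left_add_sub (a b x : E) : dist a (a + b - x) = dist b x := by
  rw [dist_eq_norm, dist_eq_norm, ← norm_neg]
  congr 1
  abel

theorem dist_right_add_sub (a b x : E) : dist b (a + b - x) = dist a x := by
  rw [add_comm, dist_left_add_sub]

theorem preimage_sub_left_eq_of_forall_mem {s : Set E} {a b : E}
    (hsymm : ∀ x ∈ s, a + b - x ∈ s) : (a + b - ·) ⁻¹' s = s :=
  Subset.antisymm (fun x hx => by simpa using hsymm _ hx) fun x hx => hsymm x hx

theorem add_sub_mem_closedBall_inter {a b x : E}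
    (hx : x ∈ closedBall a 1 ∩ closedBall b 1) : a + b - x ∈ closedBall a 1 ∩ closedBall b 1 := by
  obtain ⟨hxa, hxb⟩ := hx
  refine ⟨?_, ?_⟩ <;> rw [mem_closedBall, dist_comm]
  · rwa [dist_left_add_sub, dist_comm]
  · rwa [dist_right_add_sub, dist_comm]

theorem sub_mul_dist_sub_dist_nonneg {a b : E} {s : Set E} {ρ : E → ℝ} (hρ0 : ∀ x, 0 ≤ ρ x)
    (hsymm : ∀ x ∈ s, a + b - x ∈ s)
    (hdec : ∀ x ∈ s, ∀ y ∈ s, dist b x < dist b y → ρ y ≠ 0 → ρ y < ρ x) {x : E} (hx : x ∈ s) :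
    0 ≤ (ρ x - ρ (a + b - x)) * (dist a x - dist b x) := by
  have hle : ∀ x ∈ s, ∀ y ∈ s, dist b x < dist b y → ρ y ≤ ρ x := fun x hx y hy h =>
    (eq_or_ne (ρ y) 0).elim (fun h0 => h0 ▸ hρ0 x) fun h0 => (hdec x hx y hy h h0).le
  have hdist := dist_right_add_sub a b x
  rcases lt_trichotomy (dist b x) (dist a x) with h | h | h
  · exact mul_nonneg (sub_nonneg.2 (hle x hx _ (hsymm x hx) (hdist ▸ h))) (sub_nonneg.2 h.le)
  · simp [h]
  · exact mul_nonneg_of_nonpos_of_nonpos (sub_nonpos.2 (hle _ (hsymm x hx) x hx (hdist ▸ h)))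
      (sub_nonpos.2 h.le)

theorem sub_mul_dist_sub_dist_pos {a b : E} {s : Set E} {ρ : E → ℝ} (hρ0 : ∀ x, 0 ≤ ρ x)
    (hsymm : ∀ x ∈ s, a + b - x ∈ s)
    (hdec : ∀ x ∈ s, ∀ y ∈ s, dist b x < dist b y → ρ y ≠ 0 → ρ y < ρ x) {x : E} (hx : x ∈ s)
    (hρx : ρ x ≠ 0) (hne : dist a x ≠ dist b x) :
    0 < (ρ x - ρ (a + b - x)) * (dist a x - dist b x) := by
  have hdist := dist_right_add_sub a b x
  rcases hne.lt_or_gt with h | h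
  · exact mul_pos_of_neg_of_neg (sub_neg.2 (hdec _ (hsymm x hx) x hx (hdist ▸ h) hρx))
      (sub_neg.2 h)
  · have hlt : ρ (a + b - x) < ρ x := (eq_or_ne (ρ (a + b - x)) 0).elim
      (fun h0 => h0 ▸ (hρ0 x).lt_of_ne' hρx) (hdec x hx _ (hsymm x hx) (hdist ▸ h))
    exact mul_pos (sub_pos.2 hlt) (sub_pos.2 h)

end Reflection

theorem MeasureTheory.IntegrableOn.mul_dist_sub_dist {X : Type*} [PseudoMetricSpace X]
    [MeasurableSpace X] [OpensMeasurableSpace X] [SecondCountableTopology X]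
    {μ : Measure X} {a b : X} {s : Set X} {ρ : X → ℝ} (hρ : IntegrableOn ρ s μ) :
    IntegrableOn (fun x => ρ x * (dist a x - dist b x)) s μ := by
  have hg : AEStronglyMeasurable (fun x => dist a x - dist b x) (μ.restrict s) :=
    ((continuous_const.dist continuous_id).sub
      (continuous_const.dist continuous_id)).aestronglyMeasurable
  refine (hρ.bdd_mul (c := dist a b) hg (ae_of_all _ fun x => ?_)).congr
    (ae_of_all _ fun x => mul_comm _ _)
  simpa only [Real.norm_eq_abs, dist_comm] using abs_dist_sub_le a b x

section Symmetrization

variable {E : Type*} [NormedAddCommGroup E] [InnerProductSpace ℝ E] [FiniteDimensional ℝ E]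
  [MeasurableSpace E] [BorelSpace E] {μ : Measure E} [μ.IsAddHaarMeasure]
  {a b : E} {s : Set E} {ρ : E → ℝ}

theorem MeasureTheory.IntegrableOn.comp_sub_left_of_forall_mem (hρ : IntegrableOn ρ s μ)
    (hsymm : ∀ x ∈ s, a + b - x ∈ s) : IntegrableOn (fun x => ρ (a + b - x)) s μ := by
  have h := (Measure.measurePreserving_sub_left μ (a + b)).integrableOn_comp_preimage
    (MeasurableEquiv.subLeft (a + b)).measurableEmbedding (f := ρ) (s := s)
  rw [preimage_sub_left_eq_of_forall_mem hsymm] at h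
  exact h.2 hρ

/-- The point reflection `x ↦ a + b - x` preserves `μ` and `s` and swaps the two distances. -/
theorem setIntegral_mul_dist_sub_dist_eq_half (hsymm : ∀ x ∈ s, a + b - x ∈ s)
    (hρ : IntegrableOn ρ s μ) :
    ∫ x in s, ρ x * (dist a x - dist b x) ∂μ =
      (∫ x in s, (ρ x - ρ (a + b - x)) * (dist a x - dist b x) ∂μ) / 2 := by
  have hswap : ∫ x in s, ρ (a + b - x) * (dist a x - dist b x) ∂μ =
      -∫ x in s, ρ x * (dist a x - dist b x) ∂μ := by
    rw [← (Measure.measurePreserving_sub_left μ (a + b)).setIntegral_preimage_emb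
      (MeasurableEquiv.subLeft (a + b)).measurableEmbedding
      (fun x => ρ x * (dist a x - dist b x)) s, preimage_sub_left_eq_of_forall_mem hsymm,
      ← integral_neg]
    refine integral_congr_ae (ae_of_all _ fun x => ?_)
    simp only [dist_left_add_sub, dist_right_add_sub]
    ring
  have hρσ := hρ.comp_sub_left_of_forall_mem hsymm
  simp_rw [sub_mul (ρ _)]
  rw [integral_sub hρ.mul_dist_sub_dist hρσ.mul_dist_sub_dist, hswap]
  ring

/-- The symmetrized integrand is nonnegative on `s`, and positive off the perpendicular
bisector of `a` and `b` (a null set) wherever `ρ ≠ 0`. -/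
theorem setIntegral_mul_dist_sub_dist_pos (hab : a ≠ b) (hs : MeasurableSet s)
    (hsymm : ∀ x ∈ s, a + b - x ∈ s) (hρ0 : ∀ x, 0 ≤ ρ x) (hρ : IntegrableOn ρ s μ)
    (hdec : ∀ x ∈ s, ∀ y ∈ s, dist b x < dist b y → ρ y ≠ 0 → ρ y < ρ x)
    (hpos : μ ({x | ρ x ≠ 0} ∩ s) ≠ 0) :
    0 < ∫ x in s, ρ x * (dist a x - dist b x) ∂μ := by
  rw [setIntegral_mul_dist_sub_dist_eq_half hsymm hρ]
  refine half_pos ?_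
  have hint := (hρ.sub (hρ.comp_sub_left_of_forall_mem hsymm)).mul_dist_sub_dist (a := a) (b := b)
  have hnonneg := (ae_restrict_iff' hs).2
    (ae_of_all μ fun x hx => sub_mul_dist_sub_dist_nonneg hρ0 hsymm hdec hx)
  have hbisector : μ (AffineSubspace.perpBisector a b) = 0 :=
    Measure.addHaar_affineSubspace μ _ (mt AffineSubspace.perpBisector_eq_top.1 hab)
  rw [setIntegral_pos_iff_support_of_nonneg_ae hnonneg hint]
  calc 0 < μ (({x | ρ x ≠ 0} ∩ s) \ AffineSubspace.perpBisector a b) := by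
        rw [measure_sdiff_null hbisector]
        exact pos_iff_ne_zero.2 hpos
    _ ≤ _ := by
        refine measure_mono fun x ⟨⟨hρx, hx⟩, hxab⟩ => ⟨?_, hx⟩
        exact (sub_mul_dist_sub_dist_pos hρ0 hsymm hdec hx hρx
          (mt AffineSubspace.mem_perpBisector_iff_dist_eq'.2 hxab)).ne'

end Symmetrization

section Density

variable {E : Type*} [NormedAddCommGroup E] {p : E → ℝ}

theorem ofReal_comp_sub_le_of_dist_lt (hout : ∀ x : E, 1 < ‖x‖ → p x = 0)
    (hdec : ∀ x₁ x₂ : E, ‖x₁‖ ≤ 1 → ‖x₂‖ ≤ 1 → ‖x₁‖ < ‖x₂‖ → p x₂ < p x₁) {c x y : E}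
    (h : dist y c < dist x c) : ENNReal.ofReal (p (x - c)) ≤ ENNReal.ofReal (p (y - c)) := by
  rw [dist_eq_norm, dist_eq_norm] at h
  rcases le_or_gt ‖x - c‖ 1 with hx | hx
  · exact ENNReal.ofReal_le_ofReal (hdec _ _ (h.le.trans hx) hx h).le
  · simp [hout _ hx]

theorem toReal_ofReal_comp_sub_lt
    (hdec : ∀ x₁ x₂ : E, ‖x₁‖ ≤ 1 → ‖x₂‖ ≤ 1 → ‖x₁‖ < ‖x₂‖ → p x₂ < p x₁) {c x y : E}
    (hx : x ∈ closedBall c 1) (hy : y ∈ closedBall c 1) (h : dist c x < dist c y)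
    (hy0 : (ENNReal.ofReal (p (y - c))).toReal ≠ 0) :
    (ENNReal.ofReal (p (y - c))).toReal < (ENNReal.ofReal (p (x - c))).toReal := by
  rw [mem_closedBall, dist_eq_norm] at hx hy
  rw [dist_comm c x, dist_comm c y, dist_eq_norm, dist_eq_norm] at h
  have hpy : 0 < p (y - c) := by simpa [ENNReal.toReal_ofReal'] using hy0
  have hlt := hdec _ _ hx hy h
  rwa [ENNReal.toReal_ofReal hpy.le, ENNReal.toReal_ofReal (hpy.trans hlt).le]

end Density

theorem stmt19_general (m : ℕ)
    (μ : Measure (EuclideanSpace ℝ (Fin m))) [IsProbabilityMeasure μ]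
    (p : EuclideanSpace ℝ (Fin m) → ℝ)
    (hdens : μ = volume.withDensity fun x => ENNReal.ofReal (p x))
    (hout : ∀ x : EuclideanSpace ℝ (Fin m), 1 < ‖x‖ → p x = 0)
    (hdec : ∀ x₁ x₂ : EuclideanSpace ℝ (Fin m),
      ‖x₁‖ ≤ 1 → ‖x₂‖ ≤ 1 → ‖x₁‖ < ‖x₂‖ → p x₂ < p x₁)
    (c z : EuclideanSpace ℝ (Fin m)) (hzc : z ≠ c)
    (hposmeas :
      0 < (μ.map (fun x => x + c)) (closedBall z 1 ∩ closedBall c 1)) :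
    0 < ∫ x in closedBall z 1 ∩ closedBall c 1,
        (dist z x - dist c x) ∂(μ.map (fun x => x + c)) := by
  set f : EuclideanSpace ℝ (Fin m) → ENNReal := fun x => ENNReal.ofReal (p (x - c))
  have hmap : μ.map (· + c) = volume.withDensity f := by
    rw [hdens]
    exact Measure.map_add_right_withDensity _ _ c
  have hf : AEMeasurable f volume := NullMeasurable.aemeasurable <|
    nullMeasurable_of_dist_lt_le fun _ _ h => ofReal_comp_sub_le_of_dist_lt hout hdec h
  have hf_int : Integrable fun x => (f x).toReal := by
    refine integrable_toReal_of_lintegral_ne_top hf ?_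
    rw [← setLIntegral_univ, ← withDensity_apply _ MeasurableSet.univ, ← hmap]
    exact measure_ne_top _ _
  have hsupport : {x | (f x).toReal ≠ 0} = {x | f x ≠ 0} := by
    ext x
    simp [f, ENNReal.toReal_eq_zero_iff]
  rw [hmap] at hposmeas
  rw [hmap, setIntegral_withDensity_eq_setIntegral_toReal_smul₀' _ hf.restrict
    (ae_of_all _ fun _ => ENNReal.ofReal_lt_top)]
  simp_rw [smul_eq_mul]
  refine setIntegral_mul_dist_sub_dist_pos hzc
    (measurableSet_closedBall.inter measurableSet_closedBall)
    (fun x hx => add_sub_mem_closedBall_inter hx) (fun _ => ENNReal.toReal_nonneg)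
    hf_int.integrableOn (fun x hx y hy => toReal_ofReal_comp_sub_lt hdec hx.2 hy.2) ?_
  rw [hsupport, Ne, ← withDensity_apply_eq_zero' hf]
  exact hposmeas.ne'

/-- Let `μ` be a rotation-invariant probability measure on the closed unit ball of `ℝ^m`
(`m ≥ 2`) with density `p` (w.r.t. Lebesgue measure) vanishing outside the ball and
strictly radially decreasing. Let `c ∈ ℝ^m`, `z ∈ B₁(c)` with `z ≠ c`, and suppose
`B₁(z) ∩ B₁(c)` has positive measure under the translate `μ_c` of `μ` by `c`. Then
`∫_{B₁(z) ∩ B₁(c)} (d(z,x) − d(c,x)) dμ_c(x) > 0`. -/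
theorem stmt19 (m : ℕ) (hm : 2 ≤ m)
    (μ : Measure (EuclideanSpace ℝ (Fin m))) [IsProbabilityMeasure μ]
    (p : EuclideanSpace ℝ (Fin m) → ℝ)
    (hdens : μ = volume.withDensity fun x => ENNReal.ofReal (p x))
    (hout : ∀ x : EuclideanSpace ℝ (Fin m), 1 < ‖x‖ → p x = 0)
    (hdec : ∀ x₁ x₂ : EuclideanSpace ℝ (Fin m),
      ‖x₁‖ ≤ 1 → ‖x₂‖ ≤ 1 → ‖x₁‖ < ‖x₂‖ → p x₂ < p x₁)
    (hrot : ∀ R : EuclideanSpace ℝ (Fin m) ≃ₗᵢ[ℝ] EuclideanSpace ℝ (Fin m),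
      μ.map R = μ)
    (c z : EuclideanSpace ℝ (Fin m)) (hz : z ∈ closedBall c 1) (hzc : z ≠ c)
    (hposmeas :
      0 < (μ.map (fun x => x + c)) (closedBall z 1 ∩ closedBall c 1)) :
    0 < ∫ x in closedBall z 1 ∩ closedBall c 1,
        (dist z x - dist c x) ∂(μ.map (fun x => x + c)) :=
  stmt19_general m μ p hdens hout hdec c z hzc hposmeas
end
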